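/- arXiv:0910.2721 — 5 statements merged into one kernel-verified Lean document; each statement's English description precedes it below -/
import Mathlib

section
/- Let ρ > 4, C > 0, and let f : ℝ³ → ℝ be measurable with |f(x)| ≤ C (1+|x|)^{-ρ} for all x. Define u := G * f, i.e. u(x) = ∫_{ℝ³} G(x−y) f(y) dy. Then lim_{|x|→∞} |x|⁴ u(x) = π^{-2} ∫_{ℝ³} f(y) dy. -/
open MeasureTheory Filter

noncomputable section

/-- `ℝ³` with the Euclidean norm. -/
abbrev E3 : Type := EuclideanSpace ℝ (Fin 3)

/-- The integral kernel `G` of the resolvent `(√(-Δ)+1)⁻¹` on `ℝ³`: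
`G(x) = π⁻² ∫₀^∞ e^{-t} t (t² + |x|²)⁻² dt`. -/
def G (x : E3) : ℝ :=
  (Real.pi)^(-2 : ℤ) * ∫ t in Set.Ioi (0:ℝ), Real.exp (-t) * t / (t^2 + ‖x‖^2)^2

/-!
Split `|x|⁴ u(x) = ∫ |x|⁴ G(x - y) f(y) dy` at `|y| = |x|/2`. On the near part `|x - y| ≥ |x|/2`,
so `|x|⁴ G(x - y) ≤ 16 sup_z |z|⁴ G(z)` and dominated convergence applies, with pointwise limit
`π⁻²` because `r⁴ ∫₀^∞ e^{-t} t (t² + r²)⁻² dt → ∫₀^∞ e^{-t} t dt = 1` as `r → ∞`. On the far part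
`|f(y)| ≤ C (1 + |x|/2)^{-ρ}`, so it is at most `C ‖G‖₁ |x|⁴ (1 + |x|/2)^{-ρ} → 0` since `ρ > 4`.
`G` is integrable because moreover `r² ∫₀^∞ e^{-t} t (t² + r²)⁻² dt ≤ 1/2`.
-/

open Set Metric Topology Real

def resolventProfile (r : ℝ) : ℝ :=
  ∫ t in Ioi (0 : ℝ), exp (-t) * t / (t ^ 2 + r ^ 2) ^ 2

lemma G_eq_resolventProfile (x : E3) : G x = π ^ (-2 : ℤ) * resolventProfile ‖x‖ := rfl

lemma integrableOn_exp_neg_mul_self : IntegrableOn (fun t : ℝ => exp (-t) * t) (Ioi 0) := by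
  simpa [show (2 : ℝ) - 1 = 1 by norm_num] using GammaIntegral_convergent (s := 2) two_pos

lemma integral_exp_neg_mul_self : ∫ t in Ioi (0 : ℝ), exp (-t) * t = 1 := by
  simpa [Gamma_two, show (2 : ℝ) - 1 = 1 by norm_num] using
    (Gamma_eq_integral (s := 2) two_pos).symm

lemma resolventProfile_nonneg (r : ℝ) : 0 ≤ resolventProfile r :=
  setIntegral_nonneg measurableSet_Ioi fun t (ht : 0 < t) => by positivity

@[fun_prop]
lemma measurable_resolventProfile : Measurable resolventProfile := by
  have : Measurable fun p : ℝ × ℝ => exp (-p.2) * p.2 / (p.2 ^ 2 + p.1 ^ 2) ^ 2 := by fun_prop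
  exact (this.stronglyMeasurable.integral_prod_right' (ν := volume.restrict (Ioi 0))).measurable

lemma pow_four_mul_div_sq_add_sq_sq_le (r t : ℝ) {a : ℝ} (ha : 0 ≤ a) :
    r ^ 4 * (a / (t ^ 2 + r ^ 2) ^ 2) ≤ a := by
  rw [mul_div_left_comm]
  refine mul_le_of_le_one_right (by positivity) (div_le_one_of_le₀ ?_ (by positivity))
  nlinarith [sq_nonneg t, sq_nonneg r]

lemma pow_four_mul_resolventProfile_le (r : ℝ) : r ^ 4 * resolventProfile r ≤ 1 := by
  rw [resolventProfile, ← integral_const_mul, ← integral_exp_neg_mul_self]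
  refine integral_mono_of_nonneg ?_ integrableOn_exp_neg_mul_self ?_ <;>
    filter_upwards [ae_restrict_mem measurableSet_Ioi] with t (ht : 0 < t)
  · positivity
  · exact pow_four_mul_div_sq_add_sq_sq_le r t (by positivity)

lemma tendsto_sq_div_sq_add_sq (t : ℝ) :
    Tendsto (fun r : ℝ => r ^ 2 / (t ^ 2 + r ^ 2)) atTop (𝓝 1) := by
  have hden : Tendsto (fun r : ℝ => t ^ 2 + r ^ 2) atTop atTop :=
    tendsto_atTop_add_const_left _ _ (tendsto_pow_atTop two_ne_zero)
  have h0 : Tendsto (fun r : ℝ => t ^ 2 / (t ^ 2 + r ^ 2)) atTop (𝓝 0) :=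
    tendsto_const_nhds.div_atTop hden
  have := (tendsto_const_nhds (x := (1 : ℝ))).sub h0
  rw [sub_zero] at this
  refine this.congr' ?_
  filter_upwards [hden.eventually_gt_atTop 0] with r hr
  field_simp
  ring

lemma tendsto_pow_four_mul_resolventProfile :
    Tendsto (fun r => r ^ 4 * resolventProfile r) atTop (𝓝 1) := by
  simp_rw [resolventProfile, ← integral_const_mul]
  rw [← integral_exp_neg_mul_self]
  refine tendsto_integral_filter_of_dominated_convergence _
    (Eventually.of_forall fun r => (by fun_prop : Measurable fun t : ℝ =>
      r ^ 4 * (exp (-t) * t / (t ^ 2 + r ^ 2) ^ 2)).aestronglyMeasurable)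
    (Eventually.of_forall fun r => ?_) integrableOn_exp_neg_mul_self ?_ <;>
    filter_upwards [ae_restrict_mem measurableSet_Ioi] with t (ht : 0 < t)
  · rw [Real.norm_of_nonneg (by positivity)]
    exact pow_four_mul_div_sq_add_sq_sq_le r t (by positivity)
  · have := ((tendsto_sq_div_sq_add_sq t).pow 2).mul_const (exp (-t) * t)
    rw [one_pow, one_mul] at this
    exact this.congr fun r => by rw [div_pow]; ring

lemma sq_mul_resolventProfile_le (r : ℝ) : r ^ 2 * resolventProfile r ≤ 1 / 2 := by
  rcases eq_or_ne r 0 with rfl | hr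
  · norm_num
  have hderiv : ∀ t ∈ Ici (0 : ℝ), HasDerivAt (fun t => -r ^ 2 * (2 * (t ^ 2 + r ^ 2))⁻¹)
      (r ^ 2 * t / (t ^ 2 + r ^ 2) ^ 2) t := fun t _ =>
    ((((hasDerivAt_pow 2 t).add_const (r ^ 2)).const_mul 2).inv (by positivity)).const_mul _
      |>.congr_deriv (by norm_num; field_simp)
  have hlim : Tendsto (fun t => -r ^ 2 * (2 * (t ^ 2 + r ^ 2))⁻¹) atTop (𝓝 0) := by
    simpa using (tendsto_inv_atTop_zero.comp <| (tendsto_atTop_add_const_right _ _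
      (tendsto_pow_atTop two_ne_zero)).const_mul_atTop two_pos).const_mul (-r ^ 2)
  have hpos : ∀ t ∈ Ioi (0 : ℝ), 0 ≤ r ^ 2 * t / (t ^ 2 + r ^ 2) ^ 2 :=
    fun t (ht : 0 < t) => by positivity
  calc r ^ 2 * resolventProfile r
      = ∫ t in Ioi 0, r ^ 2 * (exp (-t) * t / (t ^ 2 + r ^ 2) ^ 2) :=
        (integral_const_mul _ _).symm
    _ ≤ ∫ t in Ioi 0, r ^ 2 * t / (t ^ 2 + r ^ 2) ^ 2 := by
        refine integral_mono_of_nonneg ?_ (integrableOn_Ioi_deriv_of_nonneg' hderiv hpos hlim)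
          ?_ <;> filter_upwards [ae_restrict_mem measurableSet_Ioi] with t (ht : 0 < t)
        · positivity
        · have : exp (-t) ≤ 1 := exp_le_one_iff.2 (neg_nonpos.2 ht.le)
          rw [mul_div_assoc']
          gcongr
          nlinarith
    _ = 1 / 2 := by
        rw [integral_Ioi_of_hasDerivAt_of_nonneg' hderiv hpos hlim]
        field_simp
        ring

lemma G_nonneg (x : E3) : 0 ≤ G x := by
  rw [G_eq_resolventProfile]
  have := resolventProfile_nonneg ‖x‖
  positivity

lemma norm_pow_four_mul_abs_G_le (z : E3) : ‖z‖ ^ 4 * |G z| ≤ π ^ (-2 : ℤ) := by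
  rw [abs_of_nonneg (G_nonneg z), G_eq_resolventProfile, mul_left_comm]
  exact mul_le_of_le_one_right (by positivity) (pow_four_mul_resolventProfile_le _)

lemma tendsto_norm_pow_four_mul_G :
    Tendsto (fun z : E3 => ‖z‖ ^ 4 * G z) (cocompact E3) (𝓝 (π ^ (-2 : ℤ))) := by
  have := (tendsto_pow_four_mul_resolventProfile.comp
    (tendsto_norm_cocompact_atTop (E := E3))).const_mul (π ^ (-2 : ℤ))
  rw [mul_one] at this
  exact this.congr fun z => by simp only [Function.comp_apply, G_eq_resolventProfile]; ring

lemma integrable_G : Integrable G := by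
  change Integrable (fun z : E3 => π ^ (-2 : ℤ) * resolventProfile ‖z‖)
  rw [integrable_fun_norm_addHaar volume (f := fun r => π ^ (-2 : ℤ) * resolventProfile r)]
  simp only [finrank_euclideanSpace, Fintype.card_fin, Nat.reduceSub, smul_eq_mul]
  refine (integrable_inv_one_add_sq.const_mul (π ^ (-2 : ℤ) * (3 / 2))).integrableOn.mono'
    (by fun_prop) (ae_of_all _ fun r => ?_)
  have hsq := sq_mul_resolventProfile_le r
  have hfour := pow_four_mul_resolventProfile_le r
  have hnonneg := resolventProfile_nonneg r
  have hbound : r ^ 2 * resolventProfile r ≤ 3 / 2 * (1 + r ^ 2)⁻¹ := by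
    rw [← div_eq_mul_inv, le_div_iff₀ (by positivity)]
    nlinarith
  rw [Real.norm_of_nonneg (by positivity)]
  calc r ^ 2 * (π ^ (-2 : ℤ) * resolventProfile r)
      = π ^ (-2 : ℤ) * (r ^ 2 * resolventProfile r) := by ring
    _ ≤ π ^ (-2 : ℤ) * (3 / 2 * (1 + r ^ 2)⁻¹) := by gcongr
    _ = _ := by ring

lemma tendsto_pow_mul_one_add_half_rpow_neg {n : ℕ} {ρ : ℝ} (hρ : n < ρ) :
    Tendsto (fun r : ℝ => r ^ n * (1 + r / 2) ^ (-ρ)) atTop (𝓝 0) := by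
  have hbase : Tendsto (fun r : ℝ => 1 + r / 2) atTop atTop :=
    tendsto_atTop_add_const_left _ _ (tendsto_id.atTop_div_const two_pos)
  have hlim := ((tendsto_rpow_neg_atTop (sub_pos.2 hρ)).comp hbase).const_mul (2 ^ n)
  rw [mul_zero] at hlim
  refine squeeze_zero' ?_ ?_ hlim <;> filter_upwards [eventually_ge_atTop 0] with r hr
  · positivity
  · have ha : 0 < 1 + r / 2 := by positivity
    calc r ^ n * (1 + r / 2) ^ (-ρ) ≤ (2 * (1 + r / 2)) ^ n * (1 + r / 2) ^ (-ρ) := by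
          gcongr; linarith
      _ = 2 ^ n * (1 + r / 2) ^ (-(ρ - n)) := by
          rw [mul_pow, mul_assoc, ← rpow_natCast (1 + r / 2) n, ← rpow_add ha, neg_sub,
            sub_eq_add_neg]

section Convolution

variable {E : Type*} [NormedAddCommGroup E] [ProperSpace E]

instance : (cocompact E).IsCountablyGenerated := by
  rw [← Metric.cobounded_eq_cocompact, ← comap_norm_atTop]
  infer_instance

lemma tendsto_norm_div_norm_sub_cocompact (y : E) :
    Tendsto (fun x => ‖x‖ / ‖x - y‖) (cocompact E) (𝓝 1) := by
  have hnorm := tendsto_norm_cocompact_atTop (E := E)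
  have hsmall : Tendsto (fun x => ‖y‖ / ‖x‖) (cocompact E) (𝓝 0) :=
    tendsto_const_nhds.div_atTop hnorm
  have hinv : Tendsto (fun x => ‖x - y‖ / ‖x‖) (cocompact E) (𝓝 1) := by
    rw [tendsto_iff_norm_sub_tendsto_zero]
    refine squeeze_zero' (Eventually.of_forall fun _ => norm_nonneg _) ?_ hsmall
    filter_upwards [hnorm.eventually_gt_atTop 0] with x hx
    rw [Real.norm_eq_abs, div_sub_one hx.ne', abs_div, abs_of_pos hx]
    gcongr
    simpa using abs_norm_sub_norm_le (x - y) x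
  simpa using hinv.inv₀ one_ne_zero

lemma tendsto_norm_pow_mul_comp_sub {K : E → ℝ} {n : ℕ} {c : ℝ}
    (hK : Tendsto (fun z => ‖z‖ ^ n * K z) (cocompact E) (𝓝 c)) (y : E) :
    Tendsto (fun x => ‖x‖ ^ n * K (x - y)) (cocompact E) (𝓝 c) := by
  have hshift : Tendsto (fun x => x - y) (cocompact E) (cocompact E) :=
    (tendsto_map (f := Homeomorph.subRight y)).mono_right
      (Homeomorph.subRight y).map_cocompact.le
  have := ((tendsto_norm_div_norm_sub_cocompact y).pow n).mul (hK.comp hshift)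
  rw [one_pow, one_mul] at this
  refine this.congr' ?_
  filter_upwards [tendsto_norm_cocompact_atTop.eventually_gt_atTop ‖y‖] with x hx
  have : ‖x - y‖ ≠ 0 := by linarith [norm_sub_norm_le x y]
  simp only [Function.comp_apply, div_pow]
  field_simp

variable [MeasurableSpace E] [BorelSpace E] {μ : Measure E} [μ.IsAddLeftInvariant]
  [μ.IsNegInvariant] {K f : E → ℝ} {n : ℕ} {c M C ρ : ℝ}

lemma tendsto_integral_indicator_closedBall_half (hK : Integrable K μ)
    (hK_bound : ∀ z, ‖z‖ ^ n * |K z| ≤ M)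
    (hK_lim : Tendsto (fun z => ‖z‖ ^ n * K z) (cocompact E) (𝓝 c)) (hf : Integrable f μ) :
    Tendsto (fun x => ∫ y, (closedBall 0 (‖x‖ / 2)).indicator
      (fun y => ‖x‖ ^ n * (K (x - y) * f y)) y ∂μ) (cocompact E) (𝓝 (c * ∫ y, f y ∂μ)) := by
  have hM : 0 ≤ M := (by positivity : 0 ≤ ‖(0 : E)‖ ^ n * |K 0|).trans (hK_bound 0)
  rw [← integral_const_mul]
  refine tendsto_integral_filter_of_dominated_convergence (fun y => 2 ^ n * M * |f y|)
    (Eventually.of_forall fun x => ?_) (Eventually.of_forall fun x => ae_of_all _ fun y => ?_)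
    (hf.abs.const_mul _) (ae_of_all _ fun y => ?_)
  · exact (((hK.comp_sub_left x).aestronglyMeasurable.mul hf.aestronglyMeasurable).const_mul
      _).indicator measurableSet_closedBall
  · by_cases hy : y ∈ closedBall 0 (‖x‖ / 2)
    · rw [mem_closedBall_zero_iff] at hy
      have hx : ‖x‖ ≤ 2 * ‖x - y‖ := by linarith [norm_sub_norm_le x y]
      have hnear : ‖x‖ ^ n * |K (x - y)| ≤ 2 ^ n * M :=
        calc ‖x‖ ^ n * |K (x - y)| ≤ (2 * ‖x - y‖) ^ n * |K (x - y)| := by gcongr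
          _ = 2 ^ n * (‖x - y‖ ^ n * |K (x - y)|) := by ring
          _ ≤ 2 ^ n * M := by gcongr; exact hK_bound _
      rw [indicator_of_mem (mem_closedBall_zero_iff.2 hy), norm_mul, norm_mul, norm_pow,
        norm_norm, Real.norm_eq_abs, Real.norm_eq_abs, ← mul_assoc]
      gcongr
    · rw [indicator_of_notMem hy, norm_zero]
      positivity
  · refine ((tendsto_norm_pow_mul_comp_sub hK_lim y).mul_const (f y)).congr' ?_
    filter_upwards [tendsto_norm_cocompact_atTop.eventually_ge_atTop (2 * ‖y‖)] with x hx
    rw [indicator_of_mem (mem_closedBall_zero_iff.2 (by linarith)), mul_assoc]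

lemma tendsto_setIntegral_compl_closedBall_half (hK : Integrable K μ)
    (hf_decay : ∀ y, |f y| ≤ C * (1 + ‖y‖) ^ (-ρ)) (hρ : n < ρ) :
    Tendsto (fun x => ∫ y in (closedBall 0 (‖x‖ / 2))ᶜ, ‖x‖ ^ n * (K (x - y) * f y) ∂μ)
      (cocompact E) (𝓝 0) := by
  have hC : 0 ≤ C := (abs_nonneg _).trans ((hf_decay 0).trans_eq (by simp))
  have hlim := ((tendsto_pow_mul_one_add_half_rpow_neg hρ).comp
    (tendsto_norm_cocompact_atTop (E := E))).const_mul (C * (∫ z, |K z| ∂μ))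
  rw [mul_zero] at hlim
  refine squeeze_zero_norm (fun x => ?_) hlim
  set δ := C * (1 + ‖x‖ / 2) ^ (-ρ)
  have hfar : ∀ y ∈ (closedBall (0 : E) (‖x‖ / 2))ᶜ,
      ‖‖x‖ ^ n * (K (x - y) * f y)‖ ≤ ‖x‖ ^ n * δ * |K (x - y)| := by
    intro y hy
    rw [mem_compl_iff, mem_closedBall_zero_iff, not_le] at hy
    have : |f y| ≤ δ := (hf_decay y).trans <| mul_le_mul_of_nonneg_left
      (rpow_le_rpow_of_nonpos (by positivity) (by linarith) (by linarith)) hC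
    rw [norm_mul, norm_mul, norm_pow, norm_norm, Real.norm_eq_abs, Real.norm_eq_abs]
    calc ‖x‖ ^ n * (|K (x - y)| * |f y|) ≤ ‖x‖ ^ n * (|K (x - y)| * δ) := by gcongr
      _ = _ := by ring
  have hint : Integrable (fun y => ‖x‖ ^ n * δ * |K (x - y)|) μ :=
    (hK.comp_sub_left x).abs.const_mul _
  calc ‖∫ y in (closedBall 0 (‖x‖ / 2))ᶜ, ‖x‖ ^ n * (K (x - y) * f y) ∂μ‖
      ≤ ∫ y in (closedBall 0 (‖x‖ / 2))ᶜ, ‖x‖ ^ n * δ * |K (x - y)| ∂μ :=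
        norm_integral_le_of_norm_le hint.integrableOn
          ((ae_restrict_iff' measurableSet_closedBall.compl).2 (ae_of_all _ hfar))
    _ ≤ ∫ y, ‖x‖ ^ n * δ * |K (x - y)| ∂μ :=
        setIntegral_le_integral hint (ae_of_all _ fun y => by positivity)
    _ = C * (∫ z, |K z| ∂μ) * (‖x‖ ^ n * (1 + ‖x‖ / 2) ^ (-ρ)) := by
        rw [integral_const_mul, integral_sub_left_eq_self (fun z => |K z|)]
        ring

theorem tendsto_norm_pow_mul_integral_sub_mul (hK : Integrable K μ)
    (hK_bound : ∀ z, ‖z‖ ^ n * |K z| ≤ M)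
    (hK_lim : Tendsto (fun z => ‖z‖ ^ n * K z) (cocompact E) (𝓝 c)) (hf : Integrable f μ)
    (hf_decay : ∀ y, |f y| ≤ C * (1 + ‖y‖) ^ (-ρ)) (hρ : n < ρ) :
    Tendsto (fun x => ‖x‖ ^ n * ∫ y, K (x - y) * f y ∂μ) (cocompact E)
      (𝓝 (c * ∫ y, f y ∂μ)) := by
  have hC : 0 ≤ C := (abs_nonneg _).trans ((hf_decay 0).trans_eq (by simp))
  have hf_bdd : ∀ y, |f y| ≤ C := fun y => (hf_decay y).trans <| mul_le_of_le_one_right hC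
    (rpow_le_one_of_one_le_of_nonpos (by linarith [norm_nonneg y]) (by linarith))
  have hsplit : ∀ x, ‖x‖ ^ n * ∫ y, K (x - y) * f y ∂μ =
      ∫ y, (closedBall 0 (‖x‖ / 2)).indicator (fun y => ‖x‖ ^ n * (K (x - y) * f y)) y ∂μ +
        ∫ y in (closedBall 0 (‖x‖ / 2))ᶜ, ‖x‖ ^ n * (K (x - y) * f y) ∂μ := fun x => by
    rw [integral_indicator measurableSet_closedBall, integral_add_compl measurableSet_closedBall
      (((hK.comp_sub_left x).mul_bdd hf.aestronglyMeasurable (ae_of_all _ hf_bdd)).const_mul _),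
      integral_const_mul]
  simpa [hsplit] using (tendsto_integral_indicator_closedBall_half hK hK_bound hK_lim hf).add
    (tendsto_setIntegral_compl_closedBall_half hK hf_decay hρ)

end Convolution

theorem asymptotics_of_resolvent_convolution_general
    (ρ C : ℝ) (hρ : 4 < ρ)
    (f : E3 → ℝ) (hmeas : Measurable f)
    (hdecay : ∀ x : E3, |f x| ≤ C * (1 + ‖x‖) ^ (-ρ))
    (u : E3 → ℝ) (hu : ∀ x : E3, u x = ∫ y : E3, G (x - y) * f y) :
    Tendsto (fun x : E3 => ‖x‖^4 * u x) (cocompact E3)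
      (nhds ((Real.pi)^(-2 : ℤ) * ∫ y : E3, f y)) := by
  have hf : Integrable f := by
    refine ((integrable_one_add_norm (E := E3) (μ := volume) ?_).const_mul C).mono'
      hmeas.aestronglyMeasurable (ae_of_all _ hdecay)
    simp only [finrank_euclideanSpace, Fintype.card_fin]
    exact_mod_cast hρ.trans' (by norm_num)
  simpa only [hu] using tendsto_norm_pow_mul_integral_sub_mul integrable_G
    norm_pow_four_mul_abs_G_le tendsto_norm_pow_four_mul_G hf hdecay (by exact_mod_cast hρ)

/-- Lemma 3.3 (i).  If `|f(x)| ≤ C (1+|x|)^{-ρ}` with `ρ > 4` and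
`u = G ∗ f`, then `|x|⁴ u(x) → π⁻² ∫ f` as `|x| → ∞`. -/
theorem asymptotics_of_resolvent_convolution
    (ρ C : ℝ) (hρ : 4 < ρ) (hC : 0 < C)
    (f : E3 → ℝ) (hmeas : Measurable f)
    (hdecay : ∀ x : E3, |f x| ≤ C * (1 + ‖x‖) ^ (-ρ))
    (u : E3 → ℝ) (hu : ∀ x : E3, u x = ∫ y : E3, G (x - y) * f y) :
    Tendsto (fun x : E3 => ‖x‖^4 * u x) (cocompact E3)
      (nhds ((Real.pi)^(-2 : ℤ) * ∫ y : E3, f y)) :=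
  asymptotics_of_resolvent_convolution_general ρ C hρ f hmeas hdecay u hu
end
end

section
/- Let λ, α > 0, let f ∈ L¹(ℝ³) with f ≥ 0, and let W ≥ 0 be measurable with ∫_{ℝ³} (1+|ξ|) W(ξ) dξ < ∞, such that a.e. on ℝ³: (|ξ|+λ) f(ξ) ≤ (W * f)(ξ) and |ξ|² W(ξ) ≤ α (f * f)(ξ). Then there exist constants a, b > 0 and non-negative integrable functions g_n on ℝ³, for n ∈ ℕ₀, such that for every n: |ξ|ⁿ f(ξ) ≤ (g_n * f)(ξ) a.e., and ‖g_n‖_{L¹} ≤ a bⁿ (2n+1)^{n−1}. -/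
/-!
Put `g₀ = W / λ` and `gₙ₊₁ = ∑ₖ C(n,k) (‖·‖ᵏ W) ∗ gₙ₋ₖ`. From `‖ξ‖ f ≤ W ∗ f` and
`‖ξ‖ⁿ ≤ (‖ξ - η‖ + ‖η‖)ⁿ` one gets `‖ξ‖ⁿ⁺¹ f ≤ ∑ₖ C(n,k) (‖·‖ᵏ W) ∗ (‖·‖ⁿ⁻ᵏ f)`, and inductively
`‖·‖ⁿ⁻ᵏ f ≤ gₙ₋ₖ ∗ f`, so associativity of convolution gives `‖ξ‖ⁿ⁺¹ f ≤ gₙ₊₁ ∗ f`.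

For the norms, integrating `‖ξ‖ⁿ f ≤ gₙ ∗ f` gives `∫ ‖ξ‖ⁿ f ≤ ‖gₙ‖₁ ‖f‖₁`, and multiplying
`‖ξ‖² W ≤ α f ∗ f` by `‖ξ‖ᵐ` and expanding binomially bounds `∫ ‖ξ‖ᵐ⁺² W` by a binomial sum of
moments of `f`. A joint strong induction yields `‖gₙ‖₁ ≤ A Cⁿ n!` and `∫ ‖ξ‖ᵏ W ≤ Cᵏ⁺¹ k!`, since
`∑ₖ C(n,k) k! (n-k)! = (n+1)!`; finally `n! ≤ 3ⁿ (2n+1)ⁿ⁻¹`.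
-/

open MeasureTheory Filter

noncomputable section

/-- Convolution on `ℝ³`: `(f ∗ g)(ξ) = ∫ f(ξ-η) g(η) dη`. -/
def conv (f g : E3 → ℝ) (ξ : E3) : ℝ := ∫ η : E3, f (ξ - η) * g η

open Finset Nat
open scoped Convolution

def normPowMul (k : ℕ) (u : E3 → ℝ) (ξ : E3) : ℝ := ‖ξ‖ ^ k * u ξ

lemma normPowMul_nonneg {u : E3 → ℝ} (hu : ∀ ξ, 0 ≤ u ξ) (k : ℕ) (ξ : E3) :
    0 ≤ normPowMul k u ξ :=
  mul_nonneg (by positivity) (hu ξ)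

@[simp]
lemma normPowMul_zero (u : E3 → ℝ) : normPowMul 0 u = u :=
  funext fun ξ => by simp [normPowMul]

lemma aestronglyMeasurable_normPowMul {u : E3 → ℝ} (hu : AEStronglyMeasurable u) (k : ℕ) :
    AEStronglyMeasurable (normPowMul k u) :=
  (measurable_norm.pow_const k).aestronglyMeasurable.mul hu

section Convolution

variable {u v w : E3 → ℝ}

lemma conv_eq_convolution (u v : E3 → ℝ) :
    conv u v = v ⋆[ContinuousLinearMap.mul ℝ ℝ, volume] u := by
  ext ξ
  simp only [conv, convolution_def, ContinuousLinearMap.mul_apply']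
  exact integral_congr_ae (Eventually.of_forall fun _ => mul_comm _ _)

lemma conv_nonneg (hu : ∀ ξ, 0 ≤ u ξ) (hv : ∀ ξ, 0 ≤ v ξ) (ξ : E3) : 0 ≤ conv u v ξ :=
  integral_nonneg fun _ => mul_nonneg (hu _) (hv _)

lemma integrable_conv (hu : Integrable u) (hv : Integrable v) : Integrable (conv u v) := by
  rw [conv_eq_convolution]
  exact hv.integrable_convolution _ hu

lemma integral_conv (hu : Integrable u) (hv : Integrable v) :
    ∫ ξ, conv u v ξ = (∫ ξ, u ξ) * ∫ ξ, v ξ := by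
  rw [conv_eq_convolution, integral_convolution _ hv hu, mul_comm]
  rfl

lemma ae_integrable_conv_integrand (hu : Integrable u) (hv : Integrable v) :
    ∀ᵐ ξ, Integrable (fun η => u (ξ - η) * v η) := by
  filter_upwards [hv.ae_convolution_exists (ContinuousLinearMap.mul ℝ ℝ) hu] with ξ hξ
  exact hξ.integrable.congr (Eventually.of_forall fun _ => mul_comm _ _)

lemma conv_conv_ae (hu : Integrable u) (hv : Integrable v) (hw : Integrable w) :
    ∀ᵐ ξ, conv (conv u v) w ξ = conv u (conv v w) ξ := by
  simp only [conv_eq_convolution]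
  set L := ContinuousLinearMap.mul ℝ ℝ
  filter_upwards [hw.norm.ae_convolution_exists L (hv.norm.integrable_convolution L hu.norm)]
    with ξ hξ
  exact (convolution_assoc L L L L (fun x y z => mul_assoc x y z) hw.aestronglyMeasurable
    hv.aestronglyMeasurable hu.aestronglyMeasurable (hw.ae_convolution_exists L hv)
    (hv.norm.ae_convolution_exists L hu.norm) hξ).symm

lemma conv_mono_ae_right (hu0 : ∀ ξ, 0 ≤ u ξ) (hu : Integrable u) (hv : Integrable v)
    (hw : Integrable w) (hvw : v ≤ᵐ[volume] w) : conv u v ≤ᵐ[volume] conv u w := by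
  filter_upwards [ae_integrable_conv_integrand hu hv, ae_integrable_conv_integrand hu hw]
    with ξ hv' hw'
  refine integral_mono_ae hv' hw' ?_
  filter_upwards [hvw] with η h
  exact mul_le_mul_of_nonneg_left h (hu0 _)

lemma conv_const_mul_left (c : ℝ) (u v : E3 → ℝ) (ξ : E3) :
    conv (fun x => c * u x) v ξ = c * conv u v ξ := by
  simp only [conv, mul_assoc, integral_const_mul]

lemma conv_finset_sum_left_ae {ι : Type*} (s : Finset ι) (c : ι → ℝ) {u : ι → E3 → ℝ}
    (hu : ∀ i ∈ s, Integrable (u i)) (hv : Integrable v) :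
    ∀ᵐ ξ, conv (fun x => ∑ i ∈ s, c i * u i x) v ξ = ∑ i ∈ s, c i * conv (u i) v ξ := by
  have h : ∀ᵐ ξ, ∀ i ∈ s, Integrable (fun η => u i (ξ - η) * v η) :=
    (eventually_all_finset s).2 fun i hi => ae_integrable_conv_integrand (hu i hi) hv
  filter_upwards [h] with ξ hξ
  simp only [conv, sum_mul, mul_assoc]
  rw [integral_finsetSum _ fun i hi => (hξ i hi).const_mul (c i)]
  exact sum_congr rfl fun i _ => integral_const_mul (c i) _

end Convolution

def binomConv (m : ℕ) (u v : ℕ → E3 → ℝ) (ξ : E3) : ℝ :=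
  ∑ j ∈ range (m + 1), (m.choose j : ℝ) * conv (u j) (v (m - j)) ξ

section BinomConv

variable {m : ℕ} {u v v' : ℕ → E3 → ℝ}

lemma binomConv_nonneg (hu : ∀ j ≤ m, ∀ ξ, 0 ≤ u j ξ) (hv : ∀ j ≤ m, ∀ ξ, 0 ≤ v j ξ)
    (ξ : E3) : 0 ≤ binomConv m u v ξ := by
  refine sum_nonneg fun j hj => mul_nonneg (Nat.cast_nonneg _) ?_
  rw [mem_range_succ_iff] at hj
  exact conv_nonneg (hu j hj) (hv (m - j) (Nat.sub_le _ _)) ξ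

lemma integrable_binomConv_term (hu : ∀ j ≤ m, Integrable (u j))
    (hv : ∀ j ≤ m, Integrable (v j)) : ∀ j ∈ range (m + 1), Integrable (conv (u j) (v (m - j))) :=
  fun j hj => integrable_conv (hu j (mem_range_succ_iff.1 hj)) (hv (m - j) (Nat.sub_le _ _))

lemma integrable_binomConv (hu : ∀ j ≤ m, Integrable (u j)) (hv : ∀ j ≤ m, Integrable (v j)) :
    Integrable (binomConv m u v) :=
  integrable_finsetSum _ fun j hj => (integrable_binomConv_term hu hv j hj).const_mul _

lemma integral_binomConv (hu : ∀ j ≤ m, Integrable (u j)) (hv : ∀ j ≤ m, Integrable (v j)) :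
    ∫ ξ, binomConv m u v ξ =
      ∑ j ∈ range (m + 1), (m.choose j : ℝ) * ((∫ ξ, u j ξ) * ∫ ξ, v (m - j) ξ) := by
  unfold binomConv
  rw [integral_finsetSum _ fun j hj => (integrable_binomConv_term hu hv j hj).const_mul _]
  refine sum_congr rfl fun j hj => ?_
  rw [integral_const_mul, integral_conv (hu j (mem_range_succ_iff.1 hj))
    (hv (m - j) (Nat.sub_le _ _))]

lemma binomConv_mono_ae_right (hu0 : ∀ j ≤ m, ∀ ξ, 0 ≤ u j ξ) (hu : ∀ j ≤ m, Integrable (u j))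
    (hv : ∀ j ≤ m, Integrable (v j)) (hv' : ∀ j ≤ m, Integrable (v' j))
    (hvv' : ∀ j ≤ m, v j ≤ᵐ[volume] v' j) : binomConv m u v ≤ᵐ[volume] binomConv m u v' := by
  have h : ∀ᵐ ξ, ∀ j ∈ range (m + 1), conv (u j) (v (m - j)) ξ ≤ conv (u j) (v' (m - j)) ξ := by
    refine (eventually_all_finset _).2 fun j hj => ?_
    rw [mem_range_succ_iff] at hj
    have hmj := Nat.sub_le m j
    exact conv_mono_ae_right (hu0 j hj) (hu j hj) (hv _ hmj) (hv' _ hmj) (hvv' _ hmj)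
  filter_upwards [h] with ξ hξ
  exact sum_le_sum fun j hj => mul_le_mul_of_nonneg_left (hξ j hj) (Nat.cast_nonneg _)

lemma conv_binomConv_ae {w : E3 → ℝ} (hu : ∀ j ≤ m, Integrable (u j))
    (hv : ∀ j ≤ m, Integrable (v j)) (hw : Integrable w) :
    ∀ᵐ ξ, conv (binomConv m u v) w ξ = binomConv m u (fun j => conv (v j) w) ξ := by
  have h : ∀ᵐ ξ, ∀ j ∈ range (m + 1),
      conv (conv (u j) (v (m - j))) w ξ = conv (u j) (conv (v (m - j)) w) ξ := by
    refine (eventually_all_finset _).2 fun j hj => ?_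
    exact conv_conv_ae (hu j (mem_range_succ_iff.1 hj)) (hv _ (Nat.sub_le _ _)) hw
  filter_upwards [h, conv_finset_sum_left_ae _ _ (integrable_binomConv_term hu hv) hw]
    with ξ hassoc hsum
  exact hsum.trans (sum_congr rfl fun j hj => by rw [hassoc j hj])

lemma norm_pow_mul_conv_le_binomConv {u v : E3 → ℝ} (hu0 : ∀ ξ, 0 ≤ u ξ) (hv0 : ∀ ξ, 0 ≤ v ξ)
    (hu : ∀ j ≤ m, Integrable (normPowMul j u)) (hv : ∀ j ≤ m, Integrable (normPowMul j v)) :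
    ∀ᵐ ξ, ‖ξ‖ ^ m * conv u v ξ ≤
      binomConv m (fun j => normPowMul j u) (fun j => normPowMul j v) ξ := by
  have hu' : Integrable u := by simpa using hu 0 (Nat.zero_le _)
  have hv' : Integrable v := by simpa using hv 0 (Nat.zero_le _)
  have hterm : ∀ᵐ ξ, ∀ j ∈ range (m + 1),
      Integrable (fun η => normPowMul j u (ξ - η) * normPowMul (m - j) v η) :=
    (eventually_all_finset _).2 fun j hj =>
      ae_integrable_conv_integrand (hu j (mem_range_succ_iff.1 hj)) (hv _ (Nat.sub_le _ _))
  filter_upwards [hterm, ae_integrable_conv_integrand hu' hv'] with ξ hterm hξ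
  have hpoint : ∀ η, ‖ξ‖ ^ m * (u (ξ - η) * v η) ≤ ∑ j ∈ range (m + 1),
      (m.choose j : ℝ) * (normPowMul j u (ξ - η) * normPowMul (m - j) v η) := by
    intro η
    have htri : ‖ξ‖ ≤ ‖ξ - η‖ + ‖η‖ := norm_le_norm_sub_add ξ η
    calc ‖ξ‖ ^ m * (u (ξ - η) * v η)
        ≤ (‖ξ - η‖ + ‖η‖) ^ m * (u (ξ - η) * v η) := by
          gcongr
          exact mul_nonneg (hu0 _) (hv0 _)
      _ = _ := by
          rw [add_pow, sum_mul]
          refine sum_congr rfl fun j _ => ?_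
          simp only [normPowMul]
          ring
  calc ‖ξ‖ ^ m * conv u v ξ = ∫ η, ‖ξ‖ ^ m * (u (ξ - η) * v η) := (integral_const_mul _ _).symm
    _ ≤ ∫ η, ∑ j ∈ range (m + 1),
          (m.choose j : ℝ) * (normPowMul j u (ξ - η) * normPowMul (m - j) v η) :=
        integral_mono (hξ.const_mul _)
          (integrable_finsetSum _ fun j hj => (hterm j hj).const_mul _) hpoint
    _ = _ := by
        rw [integral_finsetSum _ fun j hj => (hterm j hj).const_mul _]
        exact sum_congr rfl fun j _ => integral_const_mul _ _

end BinomConv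

lemma sum_choose_mul_le {m : ℕ} {a b : ℕ → ℝ} {P Q C : ℝ}
    (ha : ∀ j ≤ m, 0 ≤ a j ∧ a j ≤ P * C ^ j * j !)
    (hb : ∀ j ≤ m, 0 ≤ b j ∧ b j ≤ Q * C ^ j * j !) :
    ∑ j ∈ range (m + 1), (m.choose j : ℝ) * (a j * b (m - j)) ≤ P * Q * C ^ m * (m + 1)! := by
  have hterm : ∀ j ∈ range (m + 1), (m.choose j : ℝ) * (a j * b (m - j)) ≤ P * Q * C ^ m * m ! := by
    intro j hj
    rw [mem_range_succ_iff] at hj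
    obtain ⟨ha0, haj⟩ := ha j hj
    obtain ⟨hb0, hbj⟩ := hb (m - j) (Nat.sub_le _ _)
    have hpow : C ^ j * C ^ (m - j) = C ^ m := by rw [← pow_add, Nat.add_sub_cancel' hj]
    have hfact : (m.choose j : ℝ) * j ! * (m - j)! = m ! := by
      exact_mod_cast Nat.choose_mul_factorial_mul_factorial hj
    calc (m.choose j : ℝ) * (a j * b (m - j))
        ≤ (m.choose j : ℝ) * ((P * C ^ j * j !) * (Q * C ^ (m - j) * (m - j)!)) := by
          gcongr
          · exact ha0.trans haj
      _ = P * Q * (C ^ j * C ^ (m - j)) * ((m.choose j : ℝ) * j ! * (m - j)!) := by ring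
      _ = P * Q * C ^ m * m ! := by rw [hpow, hfact]
  calc _ ≤ ∑ _j ∈ range (m + 1), P * Q * C ^ m * m ! := sum_le_sum hterm
    _ = P * Q * C ^ m * (m + 1)! := by
        rw [sum_const, card_range, nsmul_eq_mul, Nat.factorial_succ]
        push_cast
        ring

lemma factorial_le_three_pow_mul_rpow (n : ℕ) :
    (n ! : ℝ) ≤ 3 ^ n * (2 * n + 1) ^ ((n : ℝ) - 1) := by
  rcases n with _ | m
  · simp
  have hexp : ((m + 1 : ℕ) : ℝ) - 1 = m := by push_cast; ring
  rw [hexp, Real.rpow_natCast]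
  have hnat : (m + 1)! ≤ 3 ^ (m + 1) * (2 * (m + 1) + 1) ^ m :=
    calc (m + 1)! ≤ (m + 1) ^ (m + 1) := Nat.factorial_le_pow _
      _ = (m + 1) * (m + 1) ^ m := by rw [pow_succ']
      _ ≤ 3 ^ (m + 1) * (2 * (m + 1) + 1) ^ m := by
          gcongr
          · exact (Nat.lt_two_pow_self).le.trans (Nat.pow_le_pow_left (by norm_num) _)
          · omega
  exact_mod_cast hnat

def MomentBound (u : E3 → ℝ) (P C : ℝ) (k : ℕ) : Prop :=
  Integrable (normPowMul k u) ∧ ∫ ξ, normPowMul k u ξ ≤ P * C ^ k * k !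

def IsMomentKernel (f : E3 → ℝ) (A C : ℝ) (k : ℕ) (g : E3 → ℝ) : Prop :=
  Integrable g ∧ normPowMul k f ≤ᵐ[volume] conv g f ∧ ∫ ξ, g ξ ≤ A * C ^ k * k !

def momentKernel (lam : ℝ) (W : E3 → ℝ) : ℕ → E3 → ℝ
  | 0 => fun ξ => lam⁻¹ * W ξ
  | n + 1 => fun ξ => ∑ k ∈ range (n + 1),
      (n.choose k : ℝ) * conv (normPowMul k W) (momentKernel lam W (n - k)) ξ
decreasing_by omega

lemma momentKernel_succ (lam : ℝ) (W : E3 → ℝ) (n : ℕ) :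
    momentKernel lam W (n + 1) = binomConv n (fun k => normPowMul k W) (momentKernel lam W) := by
  rw [momentKernel]
  rfl

lemma momentKernel_nonneg {lam : ℝ} {W : E3 → ℝ} (hlam : 0 ≤ lam) (hW0 : ∀ ξ, 0 ≤ W ξ)
    (n : ℕ) (ξ : E3) : 0 ≤ momentKernel lam W n ξ := by
  induction n using Nat.strong_induction_on generalizing ξ with
  | _ n ih =>
    rcases n with _ | n
    · rw [momentKernel]
      exact mul_nonneg (inv_nonneg.2 hlam) (hW0 ξ)
    · rw [momentKernel_succ]
      exact binomConv_nonneg (fun k _ => normPowMul_nonneg hW0 k)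
        (fun k hk => ih k (Nat.lt_succ_of_le hk)) ξ

lemma IsMomentKernel.momentBound {f g : E3 → ℝ} {A C : ℝ} {k : ℕ} (hg : IsMomentKernel f A C k g)
    (hf : Integrable f) (hf0 : ∀ ξ, 0 ≤ f ξ) : MomentBound f (A * ∫ ξ, f ξ) C k := by
  obtain ⟨hgint, hfg, hgA⟩ := hg
  have hconv := integrable_conv hgint hf
  have hint : Integrable (normPowMul k f) :=
    integrable_of_le_of_le (aestronglyMeasurable_normPowMul hf.1 k)
      (ae_of_all _ (normPowMul_nonneg hf0 k)) hfg (integrable_zero _ _ _) hconv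
  refine ⟨hint, ?_⟩
  calc ∫ ξ, normPowMul k f ξ ≤ ∫ ξ, conv g f ξ := integral_mono_ae hint hconv hfg
    _ = (∫ ξ, g ξ) * ∫ ξ, f ξ := integral_conv hgint hf
    _ ≤ (A * C ^ k * k !) * ∫ ξ, f ξ := mul_le_mul_of_nonneg_right hgA (integral_nonneg hf0)
    _ = (A * ∫ ξ, f ξ) * C ^ k * k ! := by ring

section WeightMoments

variable {f W : E3 → ℝ}

lemma integral_normPowMul_le_of_le_one {k : ℕ} (hk : k ≤ 1) (hW0 : ∀ ξ, 0 ≤ W ξ)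
    (hWmeas : Measurable W) (hWint : Integrable (fun ξ => (1 + ‖ξ‖) * W ξ)) :
    Integrable (normPowMul k W) ∧ ∫ ξ, normPowMul k W ξ ≤ ∫ ξ, (1 + ‖ξ‖) * W ξ := by
  have hle : ∀ ξ, normPowMul k W ξ ≤ (1 + ‖ξ‖) * W ξ := by
    intro ξ
    refine mul_le_mul_of_nonneg_right ?_ (hW0 ξ)
    interval_cases k <;> simp
  have hint : Integrable (normPowMul k W) :=
    integrable_of_le_of_le (aestronglyMeasurable_normPowMul hWmeas.aestronglyMeasurable k)
      (ae_of_all _ (normPowMul_nonneg hW0 k)) (ae_of_all _ hle) (integrable_zero _ _ _) hWint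
  exact ⟨hint, integral_mono hint hWint hle⟩

lemma integral_normPowMul_add_two_le {α : ℝ} {m : ℕ} (hα : 0 ≤ α) (hf0 : ∀ ξ, 0 ≤ f ξ)
    (hW0 : ∀ ξ, 0 ≤ W ξ) (hWmeas : Measurable W) (hf : ∀ j ≤ m, Integrable (normPowMul j f))
    (h2 : ∀ᵐ ξ, ‖ξ‖ ^ 2 * W ξ ≤ α * conv f f ξ) :
    Integrable (normPowMul (m + 2) W) ∧ ∫ ξ, normPowMul (m + 2) W ξ ≤
      α * ∑ j ∈ range (m + 1),
        (m.choose j : ℝ) * ((∫ ξ, normPowMul j f ξ) * ∫ ξ, normPowMul (m - j) f ξ) := by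
  set S := binomConv m (fun j => normPowMul j f) (fun j => normPowMul j f)
  have hS : Integrable S := integrable_binomConv hf hf
  have hle : normPowMul (m + 2) W ≤ᵐ[volume] fun ξ => α * S ξ := by
    filter_upwards [h2, norm_pow_mul_conv_le_binomConv hf0 hf0 hf hf] with ξ hW hS
    calc normPowMul (m + 2) W ξ = ‖ξ‖ ^ m * (‖ξ‖ ^ 2 * W ξ) := by
          simp only [normPowMul]
          ring
      _ ≤ ‖ξ‖ ^ m * (α * conv f f ξ) := by gcongr
      _ = α * (‖ξ‖ ^ m * conv f f ξ) := by ring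
      _ ≤ α * S ξ := by gcongr
  have hint : Integrable (normPowMul (m + 2) W) :=
    integrable_of_le_of_le (aestronglyMeasurable_normPowMul hWmeas.aestronglyMeasurable _)
      (ae_of_all _ (normPowMul_nonneg hW0 _)) hle (integrable_zero _ _ _) (hS.const_mul α)
  refine ⟨hint, ?_⟩
  calc ∫ ξ, normPowMul (m + 2) W ξ ≤ ∫ ξ, α * S ξ := integral_mono_ae hint (hS.const_mul α) hle
    _ = _ := by rw [integral_const_mul, integral_binomConv hf hf]

lemma momentBound_of_sq_norm_mul_le_conv {α B C : ℝ} {n : ℕ} (hα : 0 ≤ α) (hf0 : ∀ ξ, 0 ≤ f ξ)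
    (hW0 : ∀ ξ, 0 ≤ W ξ) (hWmeas : Measurable W)
    (hWint : Integrable (fun ξ => (1 + ‖ξ‖) * W ξ))
    (h2 : ∀ᵐ ξ, ‖ξ‖ ^ 2 * W ξ ≤ α * conv f f ξ) (hC1 : 1 ≤ C)
    (hCW : ∫ ξ, (1 + ‖ξ‖) * W ξ ≤ C) (hCα : α * B ^ 2 ≤ C)
    (hf : ∀ j ≤ n, MomentBound f B C j) : ∀ k ≤ n + 2, MomentBound W C C k := by
  intro k hk
  rcases Nat.lt_or_ge k 2 with hk2 | hk2
  · obtain ⟨hint, hle⟩ := integral_normPowMul_le_of_le_one (k := k) (by omega) hW0 hWmeas hWint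
    refine ⟨hint, hle.trans (hCW.trans ?_)⟩
    interval_cases k
    · simp
    · simpa using le_mul_of_one_le_right (by linarith) hC1
  obtain ⟨m, rfl⟩ := Nat.exists_eq_add_of_le' hk2
  obtain ⟨hint, hle⟩ :=
    integral_normPowMul_add_two_le (m := m) hα hf0 hW0 hWmeas (fun j hj => (hf j (by omega)).1) h2
  have hmom : ∀ j ≤ m, 0 ≤ ∫ ξ, normPowMul j f ξ ∧ ∫ ξ, normPowMul j f ξ ≤ B * C ^ j * j ! :=
    fun j hj => ⟨integral_nonneg (normPowMul_nonneg hf0 j), (hf j (by omega)).2⟩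
  refine ⟨hint, ?_⟩
  calc ∫ ξ, normPowMul (m + 2) W ξ ≤ α * (B * B * C ^ m * (m + 1)!) :=
        hle.trans (mul_le_mul_of_nonneg_left (sum_choose_mul_le hmom hmom) hα)
    _ = (α * B ^ 2) * C ^ m * (m + 1)! := by ring
    _ ≤ C * C ^ (m + 2) * (m + 2)! := by
        gcongr <;> omega

end WeightMoments

section Kernel

variable {lam α A C : ℝ} {f W : E3 → ℝ}

lemma isMomentKernel_binomConv {n : ℕ} {g : ℕ → E3 → ℝ} (hlam : 0 ≤ lam) (hf : Integrable f)
    (hf0 : ∀ ξ, 0 ≤ f ξ) (hW0 : ∀ ξ, 0 ≤ W ξ)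
    (h1 : ∀ᵐ ξ, (‖ξ‖ + lam) * f ξ ≤ conv W f ξ) (hW : ∀ k ≤ n, MomentBound W C C k)
    (hg0 : ∀ k ≤ n, ∀ ξ, 0 ≤ g k ξ) (hg : ∀ k ≤ n, IsMomentKernel f A C k (g k)) :
    IsMomentKernel f A C (n + 1) (binomConv n (fun k => normPowMul k W) g) := by
  have hWint : ∀ k ≤ n, Integrable (normPowMul k W) := fun k hk => (hW k hk).1
  have hgint : ∀ k ≤ n, Integrable (g k) := fun k hk => (hg k hk).1
  have hfint : ∀ k ≤ n, Integrable (normPowMul k f) :=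
    fun k hk => ((hg k hk).momentBound hf hf0).1
  have hgf : ∀ k ≤ n, Integrable (conv (g k) f) := fun k hk => integrable_conv (hgint k hk) hf
  refine ⟨integrable_binomConv hWint hgint, ?_, ?_⟩
  · have hstep : normPowMul (n + 1) f ≤ᵐ[volume] fun ξ => ‖ξ‖ ^ n * conv W f ξ := by
      filter_upwards [h1] with ξ hξ
      calc normPowMul (n + 1) f ξ = ‖ξ‖ ^ n * (‖ξ‖ * f ξ) := by
            simp only [normPowMul]
            ring
        _ ≤ ‖ξ‖ ^ n * conv W f ξ := by
            gcongr
            nlinarith [hf0 ξ]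
    filter_upwards [hstep, norm_pow_mul_conv_le_binomConv hW0 hf0 hWint hfint,
      binomConv_mono_ae_right (fun k _ => normPowMul_nonneg hW0 k) hWint hfint hgf
        fun k hk => (hg k hk).2.1,
      conv_binomConv_ae hWint hgint hf] with ξ h₁ h₂ h₃ h₄
    exact h₁.trans (h₂.trans (h₃.trans h₄.symm.le))
  · have hWmom : ∀ k ≤ n, 0 ≤ ∫ ξ, normPowMul k W ξ ∧ ∫ ξ, normPowMul k W ξ ≤ C * C ^ k * k ! :=
      fun k hk => ⟨integral_nonneg (normPowMul_nonneg hW0 k), (hW k hk).2⟩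
    have hgmom : ∀ k ≤ n, 0 ≤ ∫ ξ, g k ξ ∧ ∫ ξ, g k ξ ≤ A * C ^ k * k ! :=
      fun k hk => ⟨integral_nonneg (hg0 k hk), (hg k hk).2.2⟩
    rw [integral_binomConv hWint hgint]
    calc _ ≤ C * A * C ^ n * (n + 1)! := sum_choose_mul_le hWmom hgmom
      _ = A * C ^ (n + 1) * (n + 1)! := by ring

lemma isMomentKernel_momentKernel_zero (hlam : 0 < lam) (hf0 : ∀ ξ, 0 ≤ f ξ)
    (hW0 : ∀ ξ, 0 ≤ W ξ) (hWmeas : Measurable W) (hWint : Integrable (fun ξ => (1 + ‖ξ‖) * W ξ))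
    (h1 : ∀ᵐ ξ, (‖ξ‖ + lam) * f ξ ≤ conv W f ξ) (hA : (∫ ξ, (1 + ‖ξ‖) * W ξ) / lam ≤ A) :
    IsMomentKernel f A C 0 (momentKernel lam W 0) := by
  obtain ⟨hWint0, hWle⟩ := integral_normPowMul_le_of_le_one (k := 0) zero_le_one hW0 hWmeas hWint
  rw [normPowMul_zero] at hWint0 hWle
  rw [momentKernel]
  refine ⟨hWint0.const_mul _, ?_, ?_⟩
  · filter_upwards [h1] with ξ hξ
    rw [normPowMul_zero, conv_const_mul_left, le_inv_mul_iff₀ hlam]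
    nlinarith [hf0 ξ, norm_nonneg ξ]
  · rw [integral_const_mul, inv_mul_eq_div]
    simpa using (div_le_div_of_nonneg_right hWle hlam.le).trans hA

theorem isMomentKernel_momentKernel (hlam : 0 < lam) (hα : 0 ≤ α) (hf : Integrable f)
    (hf0 : ∀ ξ, 0 ≤ f ξ) (hW0 : ∀ ξ, 0 ≤ W ξ) (hWmeas : Measurable W)
    (hWint : Integrable (fun ξ => (1 + ‖ξ‖) * W ξ))
    (h1 : ∀ᵐ ξ, (‖ξ‖ + lam) * f ξ ≤ conv W f ξ) (h2 : ∀ᵐ ξ, ‖ξ‖ ^ 2 * W ξ ≤ α * conv f f ξ)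
    (hA : (∫ ξ, (1 + ‖ξ‖) * W ξ) / lam ≤ A) (hC1 : 1 ≤ C) (hCW : ∫ ξ, (1 + ‖ξ‖) * W ξ ≤ C)
    (hCα : α * (A * ∫ ξ, f ξ) ^ 2 ≤ C) (n : ℕ) :
    IsMomentKernel f A C n (momentKernel lam W n) := by
  induction n using Nat.strong_induction_on with
  | _ n ih =>
    rcases n with _ | n
    · exact isMomentKernel_momentKernel_zero hlam hf0 hW0 hWmeas hWint h1 hA
    have hg : ∀ k ≤ n, IsMomentKernel f A C k (momentKernel lam W k) :=
      fun k hk => ih k (Nat.lt_succ_of_le hk)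
    have hW : ∀ k ≤ n + 2, MomentBound W C C k :=
      momentBound_of_sq_norm_mul_le_conv hα hf0 hW0 hWmeas hWint h2 hC1 hCW hCα
        fun j hj => (hg j hj).momentBound hf hf0
    rw [momentKernel_succ]
    exact isMomentKernel_binomConv hlam.le hf hf0 hW0 h1 (fun k hk => hW k (by omega))
      (fun k _ => momentKernel_nonneg hlam.le hW0 k) hg

end Kernel

/-- Proposition 4.2, first part.  Under the hypotheses
`(|ξ|+λ) f ≤ W ∗ f` and `|ξ|² W ≤ α (f ∗ f)` a.e., there are constants `a, b > 0` and
non-negative integrable functions `gₙ` with `|ξ|ⁿ f ≤ gₙ ∗ f` a.e. and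
`‖gₙ‖₁ ≤ a bⁿ (2n+1)^{n-1}`. -/
theorem exponential_fourier_bound_aux
    (lam α : ℝ) (hlam : 0 < lam) (hα : 0 < α)
    (f W : E3 → ℝ)
    (hfint : Integrable f) (hfpos : ∀ ξ : E3, 0 ≤ f ξ)
    (hWpos : ∀ ξ : E3, 0 ≤ W ξ) (hWmeas : Measurable W)
    (hWint : Integrable (fun ξ : E3 => (1 + ‖ξ‖) * W ξ))
    (h1 : ∀ᵐ ξ : E3 ∂(volume), (‖ξ‖ + lam) * f ξ ≤ conv W f ξ)
    (h2 : ∀ᵐ ξ : E3 ∂(volume), ‖ξ‖^2 * W ξ ≤ α * conv f f ξ) :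
    ∃ a b : ℝ, 0 < a ∧ 0 < b ∧ ∃ g : ℕ → E3 → ℝ, ∀ n : ℕ,
      (∀ ξ : E3, 0 ≤ g n ξ) ∧ Integrable (g n) ∧
      (∀ᵐ ξ : E3 ∂(volume), ‖ξ‖^n * f ξ ≤ conv (g n) f ξ) ∧
      (∫ ξ : E3, g n ξ) ≤ a * b^n * (2*(n:ℝ)+1) ^ ((n:ℝ)-1) := by
  set w := ∫ ξ, (1 + ‖ξ‖) * W ξ
  have hw : 0 ≤ w := integral_nonneg fun ξ => mul_nonneg (by positivity) (hWpos ξ)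
  set A := 1 + w / lam
  set C := 1 + w + α * (A * ∫ ξ, f ξ) ^ 2
  have hA : 0 < A := by positivity
  have hαAF : 0 ≤ α * (A * ∫ ξ, f ξ) ^ 2 := by positivity
  have hkernel := isMomentKernel_momentKernel hlam hα.le hfint hfpos hWpos hWmeas hWint h1 h2
    (le_add_of_nonneg_left zero_le_one : w / lam ≤ A) (by linarith : 1 ≤ C) (by linarith : w ≤ C)
    (by linarith : α * (A * ∫ ξ, f ξ) ^ 2 ≤ C)
  refine ⟨A, 3 * C, hA, by linarith, momentKernel lam W, fun n => ?_⟩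
  obtain ⟨hint, hae, hle⟩ := hkernel n
  refine ⟨momentKernel_nonneg hlam.le hWpos n, hint, hae, hle.trans ?_⟩
  calc A * C ^ n * n ! ≤ A * C ^ n * (3 ^ n * (2 * n + 1) ^ ((n : ℝ) - 1)) := by
        gcongr
        exact factorial_le_three_pow_mul_rpow n
    _ = A * (3 * C) ^ n * (2 * n + 1) ^ ((n : ℝ) - 1) := by rw [mul_pow]; ring
end
end

section
/- Let W and V be non-negative measurable functions on ℝ³ and a, b > 0 constants such that for all n ∈ ℕ₀ and all p ∈ [1,∞]: ‖ |ξ|ⁿ W ‖_{L¹} ≤ a bⁿ (2n+1)^{n−1} and ‖ |ξ|ⁿ V ‖_{L^p} ≤ a bⁿ (2n+1)^{n−1}. Let λ > 0, let f ∈ L²(ℝ³) ∩ L^∞(ℝ³) with f ≥ 0, and let g ≥ 0 be measurable, such that a.e. on ℝ³: (|ξ|+λ) f(ξ) ≤ (W * f)(ξ) + (V * g)(ξ) and |ξ|² g(ξ) ≤ (V * f)(ξ). Then there exist constants ã, b̃ > 0 such that for all n ∈ ℕ₀: ‖ |ξ|ⁿ f ‖_{L^∞} ≤ ã b̃ⁿ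 (2n+1)^{n−1} and ‖ |ξ|^{n+2} g ‖_{L^∞} ≤ ã b̃^{n+2} (2(n+2)+1)^{n+1}. -/
/-!
Write `Fₙ = ‖|ξ|ⁿ f‖_∞` and `Gₙ = ‖|ξ|ⁿ g‖_∞`. Expanding `|ξ|ⁿ ≤ (|ξ - η| + |η|)ⁿ` binomially
inside the convolutions and applying Young's inequality `‖u ∗ v‖_∞ ≤ ‖u‖₁ ‖v‖_∞` turns the two
inequalities into the recursions
`G_{m+2} ≤ ∑ₖ (m choose k) κₖ F_{m-k}` and
`F_{n+1} ≤ ∑ₖ (n choose k) κₖ (F_{n-k} + (1 + I) G_{max (n-k) 2})`,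
where `κₖ` bounds the `k`-th moments of `W` and `V`. The low weights `|η|ʲ g`, `j < 2`, need not be
bounded near `0`; they are controlled by `|η|² g ∈ L^∞` and `|η|ᵏ V ∈ L¹ ∩ L^∞`, at the price of
`I = ∫_{|η|<1} |η|⁻² dη`, which is finite in dimension `3`.
The bounds `a bⁿ (2n+1)ⁿ⁻¹` are comparable to `n! βⁿ`, and bounds `A sⁿ n!` propagate through the
recursions by induction once `s` is large, because `∑ₖ (n choose k) k! βᵏ (n-k)! sⁿ⁻ᵏ ≤ 2 n! sⁿ`
for `s ≥ 2β`.
-/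

open MeasureTheory Filter

noncomputable section

open Finset Real
open scoped ENNReal Nat

theorem rpow_natCast_add_one_sub_one (x : ℝ) (m : ℕ) : x ^ (((m + 1 : ℕ) : ℝ) - 1) = x ^ m := by
  rw [Nat.cast_succ, add_sub_cancel_right, rpow_natCast]

theorem Nat.factorial_succ_le_two_mul_add_three_pow (m : ℕ) : (m + 1)! ≤ (2 * m + 3) ^ m := by
  induction m with
  | zero => rfl
  | succ m ih =>
    calc (m + 2)! = (m + 2) * (m + 1)! := Nat.factorial_succ _
      _ ≤ (2 * m + 5) * (2 * m + 5) ^ m :=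
        Nat.mul_le_mul (by omega) (ih.trans (Nat.pow_le_pow_left (by omega) m))
      _ = (2 * (m + 1) + 3) ^ (m + 1) := by ring

theorem factorial_le_two_mul_add_one_rpow (n : ℕ) : (n ! : ℝ) ≤ (2 * n + 1) ^ ((n : ℝ) - 1) := by
  cases n with
  | zero => simp
  | succ m =>
    rw [rpow_natCast_add_one_sub_one]
    exact_mod_cast (Nat.factorial_succ_le_two_mul_add_three_pow m).trans_eq (by ring)

theorem two_mul_add_one_rpow_le (n : ℕ) :
    (2 * n + 1 : ℝ) ^ ((n : ℝ) - 1) ≤ exp 1 * exp 2 ^ n * n ! := by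
  cases n with
  | zero => simp
  | succ m =>
    rw [rpow_natCast_add_one_sub_one]
    have hexp := pow_div_factorial_le_exp (2 * (m + 1 : ℕ) + 1 : ℝ) (by positivity) m
    rw [div_le_iff₀ (by positivity)] at hexp
    calc (2 * ((m + 1 : ℕ) : ℝ) + 1) ^ m ≤ exp (2 * (m + 1 : ℕ) + 1) * m ! := hexp
      _ = exp 1 * exp 2 ^ (m + 1) * m ! := by
        rw [← exp_nat_mul, ← exp_add]
        ring_nf
      _ ≤ exp 1 * exp 2 ^ (m + 1) * (m + 1)! := by
        gcongr
        exact Nat.le_succ m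

theorem ofReal_mul_pow_mul_two_mul_add_one_rpow_le (a b : ℝ) (n : ℕ) :
    ENNReal.ofReal (a * b ^ n * (2 * n + 1) ^ ((n : ℝ) - 1)) ≤
      ENNReal.ofReal (|a| * exp 1) * ENNReal.ofReal (exp 2 * |b|) ^ n * n ! := by
  rw [← ENNReal.ofReal_pow (by positivity), ← ENNReal.ofReal_mul (by positivity),
    ← ENNReal.ofReal_natCast, ← ENNReal.ofReal_mul (by positivity)]
  refine ENNReal.ofReal_le_ofReal ?_
  have hc : 0 ≤ (2 * n + 1 : ℝ) ^ ((n : ℝ) - 1) := by positivity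
  calc a * b ^ n * (2 * n + 1) ^ ((n : ℝ) - 1) ≤ |a| * |b| ^ n * (2 * n + 1) ^ ((n : ℝ) - 1) := by
        refine mul_le_mul_of_nonneg_right ?_ hc
        rw [← abs_pow, ← abs_mul]
        exact le_abs_self _
    _ ≤ |a| * |b| ^ n * (exp 1 * exp 2 ^ n * n !) := by gcongr; exact two_mul_add_one_rpow_le n
    _ = |a| * exp 1 * (exp 2 * |b|) ^ n * n ! := by ring

theorem le_ofReal_two_mul_add_one_rpow_of_le {x A s : ℝ≥0∞} (hA : A ≠ ⊤) (hs : s ≠ ⊤) {n : ℕ}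
    (h : x ≤ A * s ^ n * n !) :
    x ≤ ENNReal.ofReal (A.toReal * s.toReal ^ n * (2 * n + 1) ^ ((n : ℝ) - 1)) := by
  calc x ≤ A * s ^ n * n ! := h
    _ = ENNReal.ofReal (A.toReal * s.toReal ^ n * n !) := by
        rw [ENNReal.ofReal_mul (by positivity), ENNReal.ofReal_mul ENNReal.toReal_nonneg,
          ENNReal.ofReal_pow ENNReal.toReal_nonneg, ENNReal.ofReal_toReal hA,
          ENNReal.ofReal_toReal hs, ENNReal.ofReal_natCast]
    _ ≤ _ := by
        gcongr
        exact factorial_le_two_mul_add_one_rpow n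

theorem sum_pow_mul_pow_sub_le {β s : ℝ≥0∞} (hβs : 2 * β ≤ s) (n : ℕ) :
    ∑ k ∈ range (n + 1), β ^ k * s ^ (n - k) ≤ 2 * s ^ n := by
  induction n with
  | zero => simp
  | succ n ih =>
    rw [sum_range_succ']
    calc ∑ k ∈ range (n + 1), β ^ (k + 1) * s ^ (n + 1 - (k + 1)) + β ^ 0 * s ^ (n + 1 - 0)
        = β * ∑ k ∈ range (n + 1), β ^ k * s ^ (n - k) + s ^ (n + 1) := by
          simp only [mul_sum, Nat.add_sub_add_right, pow_succ', mul_assoc, pow_zero, one_mul,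
            Nat.sub_zero]
      _ ≤ β * (2 * s ^ n) + s ^ (n + 1) := by gcongr
      _ = 2 * β * s ^ n + s ^ (n + 1) := by ring
      _ ≤ s * s ^ n + s ^ (n + 1) := by gcongr
      _ = 2 * s ^ (n + 1) := by ring

theorem sum_choose_mul_factorial_le {c β s D : ℝ≥0∞} (hβs : 2 * β ≤ s) {n : ℕ}
    {u : ℕ → ℝ≥0∞} (hu : ∀ j ≤ n, u j ≤ D * s ^ j * j !) :
    ∑ k ∈ range (n + 1), n.choose k * (c * β ^ k * k !) * u (n - k) ≤
      2 * c * D * s ^ n * n ! := by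
  calc ∑ k ∈ range (n + 1), n.choose k * (c * β ^ k * k !) * u (n - k)
      ≤ ∑ k ∈ range (n + 1), n.choose k * (c * β ^ k * k !) * (D * s ^ (n - k) * (n - k)!) := by
        gcongr with k
        exact hu _ (Nat.sub_le n k)
    _ = c * D * n ! * ∑ k ∈ range (n + 1), β ^ k * s ^ (n - k) := by
        rw [mul_sum]
        refine sum_congr rfl fun k hk => ?_
        rw [← Nat.choose_mul_factorial_mul_factorial (Nat.lt_succ_iff.mp (mem_range.mp hk))]
        push_cast
        ring
    _ ≤ c * D * n ! * (2 * s ^ n) := by gcongr; exact sum_pow_mul_pow_sub_le hβs n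
    _ = 2 * c * D * s ^ n * n ! := by ring

theorem moment_bounds_of_recursion {F G : ℕ → ℝ≥0∞} {A c β I s : ℝ≥0∞}
    (hs : 1 ≤ s) (hβs : 2 * β ≤ s) (hcs : 2 * c * (1 + 2 * c * (1 + I)) ≤ s) (hF0 : F 0 ≤ A)
    (hG : ∀ m, G (m + 2) ≤ ∑ k ∈ range (m + 1), m.choose k * (c * β ^ k * k !) * F (m - k))
    (hF : ∀ n, F (n + 1) ≤ ∑ k ∈ range (n + 1),
      n.choose k * (c * β ^ k * k !) * (F (n - k) + (1 + I) * G (max (n - k) 2))) (n : ℕ) :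
    F n ≤ A * s ^ n * n ! ∧ G (n + 2) ≤ A * s ^ (n + 2) * (n + 2)! := by
  have hGF {m : ℕ} (hFm : ∀ j ≤ m, F j ≤ A * s ^ j * j !) : G (m + 2) ≤ 2 * c * A * s ^ m * m ! :=
    (hG m).trans (sum_choose_mul_factorial_le hβs hFm)
  have hFn (n : ℕ) : F n ≤ A * s ^ n * n ! := by
    induction n using Nat.strong_induction_on with | _ n ih =>
    cases n with
    | zero => simpa using hF0
    | succ n =>
    have hH (j : ℕ) (hj : j ≤ n) :
        F j + (1 + I) * G (max j 2) ≤ A * (1 + 2 * c * (1 + I)) * s ^ j * j ! := by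
      obtain ⟨i, hi⟩ : ∃ i, max j 2 = i + 2 := ⟨max j 2 - 2, by omega⟩
      have hGj : G (max j 2) ≤ 2 * c * A * s ^ j * j ! := by
        rw [hi, mul_assoc _ (s ^ j)]
        refine (hGF (m := i) fun l hl => ih l (by omega)).trans ?_
        rw [mul_assoc _ (s ^ i)]
        gcongr <;> omega
      calc F j + (1 + I) * G (max j 2)
          ≤ A * s ^ j * j ! + (1 + I) * (2 * c * A * s ^ j * j !) := by
            gcongr
            exact ih j (by omega)
        _ = A * (1 + 2 * c * (1 + I)) * s ^ j * j ! := by ring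
    calc F (n + 1) ≤ 2 * c * (A * (1 + 2 * c * (1 + I))) * s ^ n * n ! :=
          (hF n).trans (sum_choose_mul_factorial_le hβs hH)
      _ = A * (2 * c * (1 + 2 * c * (1 + I))) * (s ^ n * n !) := by ring
      _ ≤ A * s * (s ^ n * (n + 1)!) := by
          gcongr
          exact Nat.le_succ n
      _ = A * s ^ (n + 1) * (n + 1)! := by ring
  refine ⟨hFn n, (hGF fun j _ => hFn j).trans ?_⟩
  have hc : 2 * c ≤ s := (le_mul_of_one_le_right' le_self_add).trans hcs
  calc 2 * c * A * s ^ n * n ! = A * (2 * c) * (s ^ n * n !) := by ring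
    _ ≤ A * s * (s ^ (n + 1) * (n + 2)!) := by
        gcongr <;> omega
    _ = A * s ^ (n + 2) * (n + 2)! := by ring

open Metric

theorem enorm_pow_le_pow_mul_one_add_indicator {E : Type*} [NormedAddCommGroup E] {j m : ℕ}
    (hjm : j ≤ m) {η : E} (hη : η ≠ 0) :
    ‖η‖ₑ ^ j ≤ ‖η‖ₑ ^ m * (1 + (ball 0 1).indicator (fun x => (‖x‖ₑ ^ m)⁻¹) η) := by
  by_cases hball : η ∈ ball 0 1
  · rw [Set.indicator_of_mem hball, mul_add,
      ENNReal.mul_inv_cancel (pow_ne_zero m (enorm_ne_zero.mpr hη)) (by simp)]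
    have : ‖η‖ₑ ≤ 1 := by
      rw [← ofReal_norm, ENNReal.ofReal_le_one]
      exact (mem_ball_zero_iff.mp hball).le
    exact (pow_le_one₀ bot_le this).trans le_add_self
  · rw [Set.indicator_of_notMem hball, add_zero, mul_one]
    have : 1 ≤ ‖η‖ₑ := by
      rw [← ofReal_norm, ENNReal.one_le_ofReal]
      simpa using hball
    exact pow_le_pow_right₀ this hjm

theorem Real.enorm_le_enorm_of_nonneg_of_le {x y : ℝ} (hx : 0 ≤ x) (h : x ≤ y) : ‖x‖ₑ ≤ ‖y‖ₑ := by
  rw [Real.enorm_eq_ofReal hx]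
  exact (ENNReal.ofReal_le_ofReal h).trans (Real.ofReal_le_enorm y)

theorem setLIntegral_ball_inv_enorm_pow_lt_top {E : Type*} [NormedAddCommGroup E]
    [NormedSpace ℝ E] [FiniteDimensional ℝ E] [MeasurableSpace E] [BorelSpace E]
    (μ : Measure E) [μ.IsAddHaarMeasure] {m : ℕ} (hm : m < Module.finrank ℝ E) :
    ∫⁻ η in ball 0 1, (‖η‖ₑ ^ m)⁻¹ ∂μ < ⊤ := by
  have : Nontrivial E := Module.nontrivial_of_finrank_pos (R := ℝ) (by omega)
  have hint : IntegrableOn (fun x : E => (‖x‖ ^ m)⁻¹) (ball 0 1) μ :=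
    integrableOn_ball_of_norm_le_rpow (C := 1) (α := m) (by omega) (by exact_mod_cast hm)
      (ae_of_all _ fun x => by simp [Real.rpow_neg (norm_nonneg x)])
      (measurable_norm.pow_const m).inv.aestronglyMeasurable
  refine lt_of_eq_of_lt (lintegral_congr_ae ?_) hint.hasFiniteIntegral
  filter_upwards [ae_restrict_of_ae (compl_mem_ae_iff.mpr (measure_singleton (μ := μ) 0))]
    with x hx
  rw [enorm_inv (pow_ne_zero m (norm_ne_zero_iff.mpr hx)), enorm_pow, enorm_norm]

section Convolution

variable {E : Type*} [NormedAddCommGroup E] [MeasurableSpace E] [BorelSpace E]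
  {μ : Measure E} [μ.IsAddLeftInvariant] [μ.IsNegInvariant]

theorem lintegral_enorm_sub_left (U : E → ℝ) (ξ : E) :
    ∫⁻ η, ‖U (ξ - η)‖ₑ ∂μ = eLpNorm U 1 μ := by
  rw [eLpNorm_one_eq_lintegral_enorm]
  exact lintegral_sub_left_eq_self (fun x => ‖U x‖ₑ) ξ

theorem aemeasurable_comp_sub_left {U : E → ℝ} (hU : AEMeasurable U μ) (ξ : E) :
    AEMeasurable (fun η => U (ξ - η)) μ :=
  hU.comp_quasiMeasurePreserving (Measure.measurePreserving_sub_left μ ξ).quasiMeasurePreserving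

theorem ae_enorm_sub_left_le_eLpNorm_top (U : E → ℝ) (ξ : E) :
    ∀ᵐ η ∂μ, ‖U (ξ - η)‖ₑ ≤ eLpNorm U ⊤ μ := by
  rw [eLpNorm_exponent_top]
  exact (Measure.measurePreserving_sub_left μ ξ).quasiMeasurePreserving.ae
    (enorm_ae_le_eLpNormEssSup U μ)

theorem lintegral_enorm_sub_left_mul_le_eLpNorm_one_mul_top {U : E → ℝ} (hU : AEMeasurable U μ)
    (v : E → ℝ) (ξ : E) :
    ∫⁻ η, ‖U (ξ - η)‖ₑ * ‖v η‖ₑ ∂μ ≤ eLpNorm U 1 μ * eLpNorm v ⊤ μ := by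
  calc ∫⁻ η, ‖U (ξ - η)‖ₑ * ‖v η‖ₑ ∂μ ≤ ∫⁻ η, ‖U (ξ - η)‖ₑ * eLpNorm v ⊤ μ ∂μ := by
        refine lintegral_mono_ae ?_
        filter_upwards [enorm_ae_le_eLpNormEssSup v μ] with η hη
        rw [eLpNorm_exponent_top]
        gcongr
    _ = eLpNorm U 1 μ * eLpNorm v ⊤ μ := by
        rw [lintegral_mul_const'' _ (aemeasurable_comp_sub_left hU ξ).enorm,
          lintegral_enorm_sub_left]

theorem lintegral_enorm_sub_left_mul_le_eLpNorm_top_mul (U : E → ℝ) {X : E → ℝ≥0∞}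
    (hX : AEMeasurable X μ) (ξ : E) :
    ∫⁻ η, ‖U (ξ - η)‖ₑ * X η ∂μ ≤ eLpNorm U ⊤ μ * ∫⁻ η, X η ∂μ := by
  calc ∫⁻ η, ‖U (ξ - η)‖ₑ * X η ∂μ ≤ ∫⁻ η, eLpNorm U ⊤ μ * X η ∂μ := by
        refine lintegral_mono_ae ?_
        filter_upwards [ae_enorm_sub_left_le_eLpNorm_top U ξ] with η hη
        gcongr
    _ = eLpNorm U ⊤ μ * ∫⁻ η, X η ∂μ := lintegral_const_mul'' _ hX

theorem lintegral_enorm_sub_left_mul_pow_mul_le [NullSingletonClass μ] {U : E → ℝ}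
    (hU : AEMeasurable U μ) (v : E → ℝ) (j m : ℕ) (ξ : E) :
    ∫⁻ η, ‖U (ξ - η)‖ₑ * ‖‖η‖ ^ j * v η‖ₑ ∂μ ≤
      (eLpNorm U 1 μ + eLpNorm U ⊤ μ * ∫⁻ η in ball 0 1, (‖η‖ₑ ^ m)⁻¹ ∂μ) *
        eLpNorm (fun η => ‖η‖ ^ max j m * v η) ⊤ μ := by
  rcases le_total m j with hmj | hjm
  · rw [max_eq_left hmj]
    exact (lintegral_enorm_sub_left_mul_le_eLpNorm_one_mul_top hU _ ξ).trans
      (by gcongr; exact le_self_add)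
  rw [max_eq_right hjm]
  set K := eLpNorm (fun η => ‖η‖ ^ m * v η) ⊤ μ
  set w : E → ℝ≥0∞ := (ball 0 1).indicator (fun x => (‖x‖ₑ ^ m)⁻¹)
  have hw : Measurable w := (measurable_enorm.pow_const m).inv.indicator measurableSet_ball
  have hU' := (aemeasurable_comp_sub_left hU ξ).enorm
  have hv : ∀ᵐ η ∂μ, ‖‖η‖ ^ j * v η‖ₑ ≤ (1 + w η) * K := by
    filter_upwards [enorm_ae_le_eLpNormEssSup (fun η => ‖η‖ ^ m * v η) μ,
      compl_mem_ae_iff.mpr (measure_singleton 0)] with η hK hη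
    rw [← eLpNorm_exponent_top] at hK
    simp only [enorm_mul, enorm_pow, enorm_norm] at hK ⊢
    calc ‖η‖ₑ ^ j * ‖v η‖ₑ ≤ ‖η‖ₑ ^ m * (1 + w η) * ‖v η‖ₑ := by
          gcongr
          exact enorm_pow_le_pow_mul_one_add_indicator hjm hη
      _ = (1 + w η) * (‖η‖ₑ ^ m * ‖v η‖ₑ) := by ring
      _ ≤ (1 + w η) * K := by gcongr
  calc ∫⁻ η, ‖U (ξ - η)‖ₑ * ‖‖η‖ ^ j * v η‖ₑ ∂μ
      ≤ ∫⁻ η, (‖U (ξ - η)‖ₑ + ‖U (ξ - η)‖ₑ * w η) * K ∂μ := by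
        refine lintegral_mono_ae ?_
        filter_upwards [hv] with η hη
        calc ‖U (ξ - η)‖ₑ * ‖‖η‖ ^ j * v η‖ₑ ≤ ‖U (ξ - η)‖ₑ * ((1 + w η) * K) := by gcongr
          _ = (‖U (ξ - η)‖ₑ + ‖U (ξ - η)‖ₑ * w η) * K := by ring
    _ = (∫⁻ η, ‖U (ξ - η)‖ₑ ∂μ + ∫⁻ η, ‖U (ξ - η)‖ₑ * w η ∂μ) * K := by
        rw [lintegral_mul_const'' _ (f := fun η => ‖U (ξ - η)‖ₑ + ‖U (ξ - η)‖ₑ * w η)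
          (hU'.add (hU'.mul hw.aemeasurable)), lintegral_add_left' hU']
    _ ≤ (eLpNorm U 1 μ + eLpNorm U ⊤ μ * ∫⁻ η in ball 0 1, (‖η‖ₑ ^ m)⁻¹ ∂μ) * K := by
        rw [lintegral_enorm_sub_left, ← lintegral_indicator measurableSet_ball]
        gcongr
        exact lintegral_enorm_sub_left_mul_le_eLpNorm_top_mul U hw.aemeasurable ξ

theorem enorm_pow_mul_integral_le_sum_lintegral {u v : E → ℝ} (hu : AEMeasurable u μ)
    (hv : AEMeasurable v μ) (n : ℕ) (ξ : E) :
    ‖ξ‖ₑ ^ n * ‖∫ η, u (ξ - η) * v η ∂μ‖ₑ ≤ ∑ k ∈ range (n + 1),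
      n.choose k * ∫⁻ η, ‖‖ξ - η‖ ^ k * u (ξ - η)‖ₑ * ‖‖η‖ ^ (n - k) * v η‖ₑ ∂μ := by
  have hbinom (η : E) : ‖ξ‖ₑ ^ n * ‖u (ξ - η) * v η‖ₑ ≤ ∑ k ∈ range (n + 1),
      n.choose k * (‖‖ξ - η‖ ^ k * u (ξ - η)‖ₑ * ‖‖η‖ ^ (n - k) * v η‖ₑ) := by
    have htri : ‖ξ‖ₑ ≤ ‖ξ - η‖ₑ + ‖η‖ₑ := by simpa using enorm_add_le (ξ - η) η
    calc ‖ξ‖ₑ ^ n * ‖u (ξ - η) * v η‖ₑ ≤ (‖ξ - η‖ₑ + ‖η‖ₑ) ^ n * ‖u (ξ - η) * v η‖ₑ := by gcongr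
      _ = _ := by
        simp only [add_pow, sum_mul, enorm_mul, enorm_pow, enorm_norm]
        exact sum_congr rfl fun k _ => by ring
  calc ‖ξ‖ₑ ^ n * ‖∫ η, u (ξ - η) * v η ∂μ‖ₑ
      ≤ ‖ξ‖ₑ ^ n * ∫⁻ η, ‖u (ξ - η) * v η‖ₑ ∂μ := by
        gcongr
        exact enorm_integral_le_lintegral_enorm _
    _ = ∫⁻ η, ‖ξ‖ₑ ^ n * ‖u (ξ - η) * v η‖ₑ ∂μ := (lintegral_const_mul' _ _ (by simp)).symm
    _ ≤ ∫⁻ η, ∑ k ∈ range (n + 1),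
          n.choose k * (‖‖ξ - η‖ ^ k * u (ξ - η)‖ₑ * ‖‖η‖ ^ (n - k) * v η‖ₑ) ∂μ :=
        lintegral_mono hbinom
    _ = _ := by
        refine (lintegral_finsetSum' _ fun k _ => ?_).trans ?_
        · have hu_k : AEMeasurable (fun η => ‖ξ - η‖ ^ k * u (ξ - η)) μ :=
            aemeasurable_comp_sub_left ((measurable_norm.pow_const k).aemeasurable.mul hu) ξ
          have hv_k := (measurable_norm.pow_const (n - k)).aemeasurable.mul hv
          exact (hu_k.enorm.mul hv_k.enorm).const_mul _
        exact sum_congr rfl fun k _ => lintegral_const_mul' _ _ (by simp)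

theorem enorm_pow_mul_integral_le_sum_eLpNorm {u v : E → ℝ} (hu : AEMeasurable u μ)
    (hv : AEMeasurable v μ) (n : ℕ) (ξ : E) :
    ‖ξ‖ₑ ^ n * ‖∫ η, u (ξ - η) * v η ∂μ‖ₑ ≤ ∑ k ∈ range (n + 1), n.choose k *
      eLpNorm (fun x => ‖x‖ ^ k * u x) 1 μ * eLpNorm (fun x => ‖x‖ ^ (n - k) * v x) ⊤ μ := by
  refine (enorm_pow_mul_integral_le_sum_lintegral hu hv n ξ).trans (sum_le_sum fun k _ => ?_)
  rw [mul_assoc]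
  gcongr
  exact lintegral_enorm_sub_left_mul_le_eLpNorm_one_mul_top
    ((measurable_norm.pow_const k).aemeasurable.mul hu) _ ξ

theorem enorm_pow_mul_integral_le_sum_eLpNorm_max [NullSingletonClass μ] {u v : E → ℝ}
    (hu : AEMeasurable u μ) (hv : AEMeasurable v μ) (n m : ℕ) (ξ : E) :
    ‖ξ‖ₑ ^ n * ‖∫ η, u (ξ - η) * v η ∂μ‖ₑ ≤ ∑ k ∈ range (n + 1), n.choose k *
      (eLpNorm (fun x => ‖x‖ ^ k * u x) 1 μ +
        eLpNorm (fun x => ‖x‖ ^ k * u x) ⊤ μ * ∫⁻ η in ball 0 1, (‖η‖ₑ ^ m)⁻¹ ∂μ) *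
      eLpNorm (fun x => ‖x‖ ^ max (n - k) m * v x) ⊤ μ := by
  refine (enorm_pow_mul_integral_le_sum_lintegral hu hv n ξ).trans (sum_le_sum fun k _ => ?_)
  rw [mul_assoc]
  gcongr
  exact lintegral_enorm_sub_left_mul_pow_mul_le
    ((measurable_norm.pow_const k).aemeasurable.mul hu) _ (n - k) m ξ

theorem eLpNorm_top_pow_add_two_mul_le {V f g : E → ℝ} (hV : AEMeasurable V μ)
    (hf : AEMeasurable f μ) (hg : ∀ ξ, 0 ≤ g ξ)
    (h2 : ∀ᵐ ξ ∂μ, ‖ξ‖ ^ 2 * g ξ ≤ ∫ η, V (ξ - η) * f η ∂μ) {κ : ℕ → ℝ≥0∞}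
    (hVκ : ∀ k, eLpNorm (fun x => ‖x‖ ^ k * V x) 1 μ ≤ κ k) (m : ℕ) :
    eLpNorm (fun ξ => ‖ξ‖ ^ (m + 2) * g ξ) ⊤ μ ≤
      ∑ k ∈ range (m + 1), m.choose k * κ k * eLpNorm (fun ξ => ‖ξ‖ ^ (m - k) * f ξ) ⊤ μ := by
  rw [eLpNorm_exponent_top]
  refine essSup_le_of_ae_le _ ?_
  filter_upwards [h2] with ξ hξ
  have hg' := hg ξ
  calc ‖‖ξ‖ ^ (m + 2) * g ξ‖ₑ ≤ ‖‖ξ‖ ^ m * ∫ η, V (ξ - η) * f η ∂μ‖ₑ := by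
        refine Real.enorm_le_enorm_of_nonneg_of_le (by positivity) ?_
        rw [pow_add, mul_assoc]
        gcongr
    _ = ‖ξ‖ₑ ^ m * ‖∫ η, V (ξ - η) * f η ∂μ‖ₑ := by rw [enorm_mul, enorm_pow, enorm_norm]
    _ ≤ _ := enorm_pow_mul_integral_le_sum_eLpNorm hV hf m ξ
    _ ≤ _ := by
        gcongr with k
        exact hVκ k

theorem eLpNorm_top_pow_succ_mul_le [NullSingletonClass μ] {W V f g : E → ℝ}
    (hW : AEMeasurable W μ) (hV : AEMeasurable V μ) (hf : AEMeasurable f μ)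
    (hg : AEMeasurable g μ) (hf0 : ∀ ξ, 0 ≤ f ξ) {lam : ℝ} (hlam : 0 ≤ lam)
    (h1 : ∀ᵐ ξ ∂μ,
      (‖ξ‖ + lam) * f ξ ≤ ∫ η, W (ξ - η) * f η ∂μ + ∫ η, V (ξ - η) * g η ∂μ)
    {κ : ℕ → ℝ≥0∞} (hWκ : ∀ k, eLpNorm (fun x => ‖x‖ ^ k * W x) 1 μ ≤ κ k)
    (hVκ : ∀ k, eLpNorm (fun x => ‖x‖ ^ k * V x) 1 μ ≤ κ k)
    (hVκ' : ∀ k, eLpNorm (fun x => ‖x‖ ^ k * V x) ⊤ μ ≤ κ k) (n : ℕ) :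
    eLpNorm (fun ξ => ‖ξ‖ ^ (n + 1) * f ξ) ⊤ μ ≤ ∑ k ∈ range (n + 1), n.choose k * κ k *
      (eLpNorm (fun ξ => ‖ξ‖ ^ (n - k) * f ξ) ⊤ μ + (1 + ∫⁻ η in ball 0 1, (‖η‖ₑ ^ 2)⁻¹ ∂μ) *
        eLpNorm (fun ξ => ‖ξ‖ ^ max (n - k) 2 * g ξ) ⊤ μ) := by
  set I := ∫⁻ η in ball 0 1, (‖η‖ₑ ^ 2)⁻¹ ∂μ
  rw [eLpNorm_exponent_top]
  refine essSup_le_of_ae_le _ ?_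
  filter_upwards [h1] with ξ hξ
  have hf' := hf0 ξ
  have hsplit : ‖‖ξ‖ ^ (n + 1) * f ξ‖ₑ ≤ ‖ξ‖ₑ ^ n * ‖∫ η, W (ξ - η) * f η ∂μ‖ₑ +
      ‖ξ‖ₑ ^ n * ‖∫ η, V (ξ - η) * g η ∂μ‖ₑ := by
    calc ‖‖ξ‖ ^ (n + 1) * f ξ‖ₑ
        ≤ ‖‖ξ‖ ^ n * (∫ η, W (ξ - η) * f η ∂μ + ∫ η, V (ξ - η) * g η ∂μ)‖ₑ := by
          refine Real.enorm_le_enorm_of_nonneg_of_le (by positivity) ?_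
          rw [pow_succ, mul_assoc]
          gcongr
          nlinarith
      _ ≤ _ := by
          rw [enorm_mul, enorm_pow, enorm_norm, ← mul_add]
          gcongr
          exact enorm_add_le _ _
  refine hsplit.trans ?_
  simp only [mul_add, sum_add_distrib]
  gcongr ?_ + ?_
  · refine (enorm_pow_mul_integral_le_sum_eLpNorm hW hf n ξ).trans ?_
    gcongr with k
    exact hWκ k
  · refine (enorm_pow_mul_integral_le_sum_eLpNorm_max hV hg n 2 ξ).trans
      (sum_le_sum fun k _ => ?_)
    calc _ ≤ n.choose k * (κ k + κ k * I) * eLpNorm (fun x => ‖x‖ ^ max (n - k) 2 * g x) ⊤ μ := by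
          gcongr
          exacts [hVκ k, hVκ' k]
      _ = _ := by ring

end Convolution

theorem exponential_fourier_bound_system_general
    (W V : E3 → ℝ) (a b : ℝ)
    (hWmeas : Measurable W)
    (hVmeas : Measurable V)
    (hW : ∀ n : ℕ, eLpNorm (fun ξ : E3 => ‖ξ‖^n * W ξ) 1 (volume : Measure E3) ≤
      ENNReal.ofReal (a * b^n * (2*(n:ℝ)+1) ^ ((n:ℝ)-1)))
    (hV : ∀ n : ℕ, ∀ p : ENNReal, 1 ≤ p →
      eLpNorm (fun ξ : E3 => ‖ξ‖^n * V ξ) p (volume : Measure E3) ≤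
        ENNReal.ofReal (a * b^n * (2*(n:ℝ)+1) ^ ((n:ℝ)-1)))
    (lam : ℝ) (hlam : 0 < lam)
    (f g : E3 → ℝ)
    (hfinf : MemLp f ⊤ (volume : Measure E3))
    (hfpos : ∀ ξ : E3, 0 ≤ f ξ)
    (hgpos : ∀ ξ : E3, 0 ≤ g ξ) (hgmeas : Measurable g)
    (h1 : ∀ᵐ ξ : E3 ∂(volume), (‖ξ‖ + lam) * f ξ ≤ conv W f ξ + conv V g ξ)
    (h2 : ∀ᵐ ξ : E3 ∂(volume), ‖ξ‖^2 * g ξ ≤ conv V f ξ) :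
    ∃ ta tb : ℝ, 0 < ta ∧ 0 < tb ∧ ∀ n : ℕ,
      eLpNorm (fun ξ : E3 => ‖ξ‖^n * f ξ) ⊤ (volume : Measure E3) ≤
        ENNReal.ofReal (ta * tb^n * (2*(n:ℝ)+1) ^ ((n:ℝ)-1)) ∧
      eLpNorm (fun ξ : E3 => ‖ξ‖^(n+2) * g ξ) ⊤ (volume : Measure E3) ≤
        ENNReal.ofReal (ta * tb^(n+2) * (2*((n:ℝ)+2)+1) ^ (n+1 : ℕ)) := by
  set c := ENNReal.ofReal (|a| * exp 1)
  set β := ENNReal.ofReal (exp 2 * |b|)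
  set I := ∫⁻ η in ball (0 : E3) 1, (‖η‖ₑ ^ 2)⁻¹
  have hκ := ofReal_mul_pow_mul_two_mul_add_one_rpow_le a b
  have hI : I ≠ ⊤ := (setLIntegral_ball_inv_enorm_pow_lt_top volume (by simp)).ne
  set A := eLpNorm f ⊤ volume + 1
  set s := 1 + 2 * β + 2 * c * (1 + 2 * c * (1 + I))
  have hA : A ≠ ⊤ := by finiteness
  have hs : s ≠ ⊤ := by finiteness
  have hs1 : 1 ≤ s := le_self_add.trans le_self_add
  have hG := eLpNorm_top_pow_add_two_mul_le hVmeas.aemeasurable hfinf.1.aemeasurable hgpos h2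
      fun k => (hV k 1 le_rfl).trans (hκ k)
  have hF := eLpNorm_top_pow_succ_mul_le hWmeas.aemeasurable hVmeas.aemeasurable
      hfinf.1.aemeasurable hgmeas.aemeasurable hfpos hlam.le h1 (fun k => (hW k).trans (hκ k))
      (fun k => (hV k 1 le_rfl).trans (hκ k)) fun k => (hV k ⊤ le_top).trans (hκ k)
  have key := moment_bounds_of_recursion
    (F := fun n => eLpNorm (fun ξ : E3 => ‖ξ‖ ^ n * f ξ) ⊤ volume)
    (G := fun n => eLpNorm (fun ξ : E3 => ‖ξ‖ ^ n * g ξ) ⊤ volume) (A := A)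
    hs1 (le_add_self.trans le_self_add) le_add_self (by simp [A]) hG hF
  refine ⟨A.toReal, s.toReal, ENNReal.toReal_pos (by simp [A]) hA,
    ENNReal.toReal_pos (zero_lt_one.trans_le hs1).ne' hs, fun n =>
      ⟨le_ofReal_two_mul_add_one_rpow_of_le hA hs (key n).1, ?_⟩⟩
  have hg := le_ofReal_two_mul_add_one_rpow_of_le hA hs (key n).2
  rwa [show ((n + 2 : ℕ) : ℝ) - 1 = ((n + 1 : ℕ) : ℝ) by push_cast; ring, rpow_natCast,
    Nat.cast_add, Nat.cast_two] at hg

/-- Lemma 5.3.  If `‖|ξ|ⁿ W‖₁ ≤ a bⁿ (2n+1)^{n-1}` and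
`‖|ξ|ⁿ V‖_p ≤ a bⁿ (2n+1)^{n-1}` for all `n` and `p ∈ [1,∞]`, `f ∈ L² ∩ L^∞` and `g ≥ 0`
satisfy `(|ξ|+λ) f ≤ W ∗ f + V ∗ g` and `|ξ|² g ≤ V ∗ f` a.e., then there are `ã, b̃ > 0`
with `‖|ξ|ⁿ f‖_∞ ≤ ã b̃ⁿ (2n+1)^{n-1}` and `‖|ξ|^{n+2} g‖_∞ ≤ ã b̃^{n+2} (2(n+2)+1)^{n+1}`. -/
theorem exponential_fourier_bound_system
    (W V : E3 → ℝ) (a b : ℝ) (ha : 0 < a) (hb : 0 < b)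
    (hWpos : ∀ ξ : E3, 0 ≤ W ξ) (hWmeas : Measurable W)
    (hVpos : ∀ ξ : E3, 0 ≤ V ξ) (hVmeas : Measurable V)
    (hW : ∀ n : ℕ, eLpNorm (fun ξ : E3 => ‖ξ‖^n * W ξ) 1 (volume : Measure E3) ≤
      ENNReal.ofReal (a * b^n * (2*(n:ℝ)+1) ^ ((n:ℝ)-1)))
    (hV : ∀ n : ℕ, ∀ p : ENNReal, 1 ≤ p →
      eLpNorm (fun ξ : E3 => ‖ξ‖^n * V ξ) p (volume : Measure E3) ≤
        ENNReal.ofReal (a * b^n * (2*(n:ℝ)+1) ^ ((n:ℝ)-1)))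
    (lam : ℝ) (hlam : 0 < lam)
    (f g : E3 → ℝ)
    (hf2 : MemLp f 2 (volume : Measure E3)) (hfinf : MemLp f ⊤ (volume : Measure E3))
    (hfpos : ∀ ξ : E3, 0 ≤ f ξ)
    (hgpos : ∀ ξ : E3, 0 ≤ g ξ) (hgmeas : Measurable g)
    (h1 : ∀ᵐ ξ : E3 ∂(volume), (‖ξ‖ + lam) * f ξ ≤ conv W f ξ + conv V g ξ)
    (h2 : ∀ᵐ ξ : E3 ∂(volume), ‖ξ‖^2 * g ξ ≤ conv V f ξ) :
    ∃ ta tb : ℝ, 0 < ta ∧ 0 < tb ∧ ∀ n : ℕ,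
      eLpNorm (fun ξ : E3 => ‖ξ‖^n * f ξ) ⊤ (volume : Measure E3) ≤
        ENNReal.ofReal (ta * tb^n * (2*(n:ℝ)+1) ^ ((n:ℝ)-1)) ∧
      eLpNorm (fun ξ : E3 => ‖ξ‖^(n+2) * g ξ) ⊤ (volume : Measure E3) ≤
        ENNReal.ofReal (ta * tb^(n+2) * (2*((n:ℝ)+2)+1) ^ (n+1 : ℕ)) :=
  exponential_fourier_bound_system_general W V a b hWmeas hVmeas hW hV lam hlam f g hfinf hfpos
    hgpos hgmeas h1 h2
end
end

section
/- Fix t > 0. Let h ∈ L¹(ℝ³) be real-valued, odd with respect to the plane {x₁ = 0} (h(−y₁,y') = −h(y₁,y') a.e.), with h ≥ 0 a.e. on {y₁ > 0} and h not a.e. equal to 0. Define u(x) := π^{-2} ∫_{ℝ³} t (t² + |x−y|²)^{-2} h(y) dy. Then u(x) > 0 for every x with x₁ > 0, and for every x' ∈ ℝ² the partial derivative ∂u/∂x₁ at the point (0,x') exists and equals (8/π²) ∫_{y₁>0} t y₁ (t² + y₁² + |x'−y'|²)^{-3} h(y) dy, which is strictly positive. -/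
/-!
Let `R` be the reflection in the hyperplane `{⟪x, v⟫ = 0}` (here `v = e₁`). It preserves Lebesgue
measure and the hyperplane is null, so for `h` odd under `R` and any kernel `K`,
`∫ K h = ∫_{⟪y, v⟫ > 0} (K y - K (R y)) h y`. With `K y = P(x - y)` for the Poisson kernel `P` and
`⟪x, v⟫ > 0`, the identity `‖x - R y‖² = ‖x - y‖² + 4 ⟪x, v⟫ ⟪y, v⟫` makes `K y - K (R y) > 0` on the
half-space, where `h ≥ 0` is not a.e. zero; hence `u x > 0`. The derivative of `P` is bounded by
`2 / t⁴`, so `u` can be differentiated under the integral sign; at a boundary point the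
derivative kernel is odd under `R`, and the same symmetrisation gives twice its half-space part.
-/

open MeasureTheory Filter

noncomputable section

def pt (s y z : ℝ) : E3 := (WithLp.equiv 2 (Fin 3 → ℝ)).symm ![s, y, z]

open RealInnerProductSpace Submodule

section PoissonKernel

variable {V : Type*} [NormedAddCommGroup V] {t : ℝ}

/-- For `V = ℝ³`, `π⁻² • halfSpacePoissonKernel t` is the Poisson kernel of `ℝ³ × (0, ∞)` at
height `t`. -/
def halfSpacePoissonKernel (t : ℝ) (z : V) : ℝ := t / (t ^ 2 + ‖z‖ ^ 2) ^ 2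

theorem halfSpacePoissonKernel_nonneg (ht : 0 ≤ t) (z : V) : 0 ≤ halfSpacePoissonKernel t z := by
  unfold halfSpacePoissonKernel; positivity

theorem halfSpacePoissonKernel_le (ht : 0 < t) (z : V) :
    halfSpacePoissonKernel t z ≤ 1 / t ^ 3 := by
  have : t ^ 4 ≤ (t ^ 2 + ‖z‖ ^ 2) ^ 2 := by nlinarith [sq_nonneg ‖z‖, sq_nonneg t]
  unfold halfSpacePoissonKernel
  rw [div_le_div_iff₀ (by positivity) (by positivity)]
  nlinarith

theorem continuous_halfSpacePoissonKernel (ht : t ≠ 0) :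
    Continuous (halfSpacePoissonKernel t : V → ℝ) :=
  continuous_const.div (by fun_prop) fun z => by positivity

theorem integrable_halfSpacePoissonKernel_mul [MeasurableSpace V] [OpensMeasurableSpace V]
    {μ : Measure V} {h : V → ℝ} (ht : 0 < t) (hh : Integrable h μ) (x : V) :
    Integrable (fun y => halfSpacePoissonKernel t (x - y) * h y) μ :=
  hh.bdd_mul (c := 1 / t ^ 3)
    ((continuous_halfSpacePoissonKernel ht.ne').comp (by fun_prop)).aestronglyMeasurable
    (Eventually.of_forall fun y => by
      rw [Real.norm_of_nonneg (halfSpacePoissonKernel_nonneg ht.le _)]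
      exact halfSpacePoissonKernel_le ht _)

variable [InnerProductSpace ℝ V]

theorem HasDerivAt.halfSpacePoissonKernel (ht : t ≠ 0) {f : ℝ → V} {f' : V} {s : ℝ}
    (hf : HasDerivAt f f' s) :
    HasDerivAt (fun s => halfSpacePoissonKernel t (f s))
      (-4 * t * ⟪f s, f'⟫ / (t ^ 2 + ‖f s‖ ^ 2) ^ 3) s := by
  have hD : 0 < t ^ 2 + ‖f s‖ ^ 2 := by positivity
  have hden := (((hf.norm_sq.const_add (t ^ 2)).fun_pow 2).fun_inv
    (pow_ne_zero 2 hD.ne')).const_mul t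
  simp only [_root_.halfSpacePoissonKernel, div_eq_mul_inv]
  refine hden.congr_deriv ?_
  norm_num
  field_simp
  ring

theorem abs_deriv_halfSpacePoissonKernel_le (ht : 0 < t) (z v : V) :
    |-4 * t * ⟪z, v⟫ / (t ^ 2 + ‖z‖ ^ 2) ^ 3| ≤ 2 / t ^ 4 * ‖v‖ := by
  have hD : 0 < t ^ 2 + ‖z‖ ^ 2 := by positivity
  have hamgm : 2 * t * ‖z‖ ≤ t ^ 2 + ‖z‖ ^ 2 := by nlinarith [sq_nonneg (t - ‖z‖)]
  have ht4 : t ^ 4 ≤ (t ^ 2 + ‖z‖ ^ 2) ^ 2 := by nlinarith [sq_nonneg ‖z‖, sq_nonneg t]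
  rw [abs_div, abs_of_pos (pow_pos hD 3), div_le_iff₀ (pow_pos hD 3), abs_mul,
    abs_of_neg (by linarith : -4 * t < 0)]
  calc -(-4 * t) * |⟪z, v⟫| ≤ 2 * (2 * t * ‖z‖) * ‖v‖ := by
        nlinarith [abs_real_inner_le_norm z v]
    _ ≤ 2 * (t ^ 2 + ‖z‖ ^ 2) * ‖v‖ := by gcongr
    _ = 2 / t ^ 4 * ‖v‖ * ((t ^ 2 + ‖z‖ ^ 2) * t ^ 4) := by field_simp
    _ ≤ 2 / t ^ 4 * ‖v‖ * (t ^ 2 + ‖z‖ ^ 2) ^ 3 := by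
        gcongr; nlinarith

theorem integrable_deriv_halfSpacePoissonKernel_mul [MeasurableSpace V] [OpensMeasurableSpace V]
    {μ : Measure V} {h : V → ℝ} (ht : 0 < t) (hh : Integrable h μ)
    (x v : V) :
    Integrable (fun y => -4 * t * ⟪x - y, v⟫ / (t ^ 2 + ‖x - y‖ ^ 2) ^ 3 * h y) μ :=
  hh.bdd_mul (c := 2 / t ^ 4 * ‖v‖)
    (Continuous.div (by fun_prop) (by fun_prop) fun y => by positivity).aestronglyMeasurable
    (Eventually.of_forall fun y => abs_deriv_halfSpacePoissonKernel_le ht _ _)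

theorem hasLineDerivAt_integral_halfSpacePoissonKernel_mul [MeasurableSpace V]
    [OpensMeasurableSpace V] {μ : Measure V} {h : V → ℝ} (ht : 0 < t) (hh : Integrable h μ)
    (x v : V) :
    HasLineDerivAt ℝ (fun x => ∫ y, halfSpacePoissonKernel t (x - y) * h y ∂μ)
      (∫ y, -4 * t * ⟪x - y, v⟫ / (t ^ 2 + ‖x - y‖ ^ 2) ^ 3 * h y ∂μ) x v := by
  have hline : ∀ y s, HasDerivAt (fun s : ℝ => x + s • v - y) v s := fun y s => by
    simpa using ((hasDerivAt_id s).smul_const v).const_add x |>.sub_const y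
  have key := hasDerivAt_integral_of_dominated_loc_of_deriv_le (μ := μ) (x₀ := 0)
    (F := fun s y => halfSpacePoissonKernel t (x + s • v - y) * h y)
    (F' := fun s y => -4 * t * ⟪x + s • v - y, v⟫ / (t ^ 2 + ‖x + s • v - y‖ ^ 2) ^ 3 * h y)
    (bound := fun y => 2 / t ^ 4 * ‖v‖ * ‖h y‖) univ_mem
    (Eventually.of_forall fun s => (integrable_halfSpacePoissonKernel_mul ht hh _).1)
    (by simpa using integrable_halfSpacePoissonKernel_mul ht hh x)
    (by simpa using (integrable_deriv_halfSpacePoissonKernel_mul ht hh x v).1)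
    (Eventually.of_forall fun y s _ => by
      rw [norm_mul]
      gcongr
      exact abs_deriv_halfSpacePoissonKernel_le ht _ _)
    (hh.norm.const_mul _)
    (Eventually.of_forall fun y s _ =>
      ((hline y s).halfSpacePoissonKernel ht.ne').mul_const (h y))
  simpa [HasLineDerivAt] using key.2

end PoissonKernel

section Reflection

variable {V : Type*} [NormedAddCommGroup V] [InnerProductSpace ℝ V] {v : V}

theorem inner_reflection_orthogonal_singleton (v x : V) :
    ⟪(ℝ ∙ v)ᗮ.reflection x, v⟫ = -⟪x, v⟫ :=
  calc ⟪(ℝ ∙ v)ᗮ.reflection x, v⟫ = ⟪(ℝ ∙ v)ᗮ.reflection x, -(ℝ ∙ v)ᗮ.reflection v⟫ := by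
        rw [reflection_orthogonalComplement_singleton_eq_neg, neg_neg]
    _ = -⟪x, v⟫ := by rw [inner_neg_right, LinearIsometryEquiv.inner_map_map]

theorem reflection_orthogonal_singleton_apply (hv : ‖v‖ = 1) (x : V) :
    (ℝ ∙ v)ᗮ.reflection x = x - (2 * ⟪v, x⟫) • v := by
  rw [reflection_orthogonal_apply, reflection_singleton_apply, hv]
  module

theorem norm_sub_reflection_orthogonal_singleton_sq (hv : ‖v‖ = 1) (x y : V) :
    ‖x - (ℝ ∙ v)ᗮ.reflection y‖ ^ 2 = ‖x - y‖ ^ 2 + 4 * ⟪x, v⟫ * ⟪y, v⟫ := by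
  rw [reflection_orthogonal_singleton_apply hv, sub_sub_eq_add_sub, add_sub_right_comm,
    norm_add_sq_real, inner_smul_right, norm_smul, inner_sub_left, hv, real_inner_comm v y,
    Real.norm_eq_abs, mul_one, sq_abs]
  ring

theorem norm_sub_reflection_orthogonal_singleton_of_inner_eq_zero {p : V} (hp : ⟪p, v⟫ = 0)
    (y : V) : ‖p - (ℝ ∙ v)ᗮ.reflection y‖ = ‖p - y‖ := by
  have hfix : (ℝ ∙ v)ᗮ.reflection p = p :=
    reflection_mem_subspace_eq_self (mem_orthogonal_singleton_iff_inner_left.2 hp)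
  rw [← hfix, ← map_sub, LinearIsometryEquiv.norm_map, hfix]

theorem halfSpacePoissonKernel_sub_reflection_lt {t : ℝ} (hv : ‖v‖ = 1) (ht : 0 < t) {x y : V}
    (hx : 0 < ⟪x, v⟫) (hy : 0 < ⟪y, v⟫) :
    halfSpacePoissonKernel t (x - (ℝ ∙ v)ᗮ.reflection y) < halfSpacePoissonKernel t (x - y) := by
  have hnorm := norm_sub_reflection_orthogonal_singleton_sq hv x y
  refine div_lt_div_of_pos_left ht (by positivity) (pow_lt_pow_left₀ ?_ (by positivity) two_ne_zero)
  nlinarith [mul_pos hx hy]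

variable [FiniteDimensional ℝ V] [MeasurableSpace V] [BorelSpace V]

theorem volume_setOf_inner_eq_zero (hv : v ≠ 0) : volume {x : V | ⟪x, v⟫ = 0} = 0 := by
  have hne : (ℝ ∙ v)ᗮ ≠ ⊤ := fun htop => by
    have : v ∈ (ℝ ∙ v)ᗮ := htop ▸ mem_top
    exact hv (inner_self_eq_zero.1 (mem_orthogonal_singleton_iff_inner_left.1 this))
  rw [show {x : V | ⟪x, v⟫ = 0} = (ℝ ∙ v)ᗮ from
    Set.ext fun x => mem_orthogonal_singleton_iff_inner_left.symm]
  exact Measure.addHaar_submodule volume _ hne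

theorem measurableSet_setOf_inner_pos (v : V) : MeasurableSet {x : V | 0 < ⟪x, v⟫} :=
  measurableSet_lt measurable_const (by fun_prop)

theorem integral_eq_setIntegral_add_reflection {E : Type*} [NormedAddCommGroup E]
    [NormedSpace ℝ E] (hv : v ≠ 0) {f : V → E} (hf : Integrable f) :
    ∫ x, f x = ∫ x in {x | 0 < ⟪x, v⟫}, (f x + f ((ℝ ∙ v)ᗮ.reflection x)) := by
  set R := (ℝ ∙ v)ᗮ.reflection
  set S := {x : V | 0 < ⟪x, v⟫}
  have hR : MeasurePreserving R := R.measurePreserving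
  have hpre : R ⁻¹' S = {x | ⟪x, v⟫ < 0} := by
    ext x; simp [S, R, inner_reflection_orthogonal_singleton]
  have hcompl : (Sᶜ : Set V) =ᵐ[volume] R ⁻¹' S := by
    rw [hpre]
    filter_upwards [measure_eq_zero_iff_ae_notMem.1 (volume_setOf_inner_eq_zero hv)] with x hx
    change (¬ 0 < ⟪x, v⟫) = (⟪x, v⟫ < 0)
    exact propext ⟨fun h => lt_of_le_of_ne (not_lt.1 h) hx, fun h => not_lt.2 h.le⟩
  have hreflect : ∫ x in Sᶜ, f x = ∫ x in S, f (R x) := by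
    calc ∫ x in Sᶜ, f x = ∫ x in R ⁻¹' S, f (R (R x)) := by
          simp only [R, reflection_reflection, setIntegral_congr_set hcompl]
      _ = ∫ x in S, f (R x) :=
          hR.setIntegral_preimage_emb R.toHomeomorph.measurableEmbedding (fun y => f (R y)) S
  rw [← integral_add_compl (measurableSet_setOf_inner_pos v : MeasurableSet S) hf, hreflect]
  exact (integral_add hf.integrableOn (hR.integrable_comp_of_integrable hf).integrableOn).symm

end Reflection

section OddFunction

variable {V : Type*} [NormedAddCommGroup V] [InnerProductSpace ℝ V] [FiniteDimensional ℝ V]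
  [MeasurableSpace V] [BorelSpace V] {v : V} {t : ℝ} {h : V → ℝ}

theorem not_ae_restrict_eq_zero_of_odd {E : Type*} [NormedAddCommGroup E] [NormedSpace ℝ E]
    (hv : v ≠ 0) {h : V → E} (hh : Integrable h)
    (hodd : ∀ᵐ x, h ((ℝ ∙ v)ᗮ.reflection x) = -h x) (hne : ¬ h =ᵐ[volume] 0) :
    ¬ h =ᵐ[volume.restrict {x | 0 < ⟪x, v⟫}] 0 := by
  intro hS
  have hzero : ∫ x, ‖h x‖ = 0 := by
    rw [integral_eq_setIntegral_add_reflection hv hh.norm]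
    refine integral_eq_zero_of_ae ?_
    filter_upwards [hS, ae_restrict_of_ae hodd] with x h0 hx
    simp [hx, h0]
  refine hne ?_
  filter_upwards [(integral_eq_zero_iff_of_nonneg (fun x => norm_nonneg _) hh.norm).1 hzero]
    with x hx using norm_eq_zero.1 hx

theorem setIntegral_mul_pos_of_odd (hv : v ≠ 0) (hh : Integrable h)
    (hodd : ∀ᵐ x, h ((ℝ ∙ v)ᗮ.reflection x) = -h x) (hpos : ∀ᵐ x, 0 < ⟪x, v⟫ → 0 ≤ h x)
    (hne : ¬ h =ᵐ[volume] 0) {k : V → ℝ} (hk : ∀ x, 0 < ⟪x, v⟫ → 0 < k x)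
    (hkh : IntegrableOn (fun x => k x * h x) {x | 0 < ⟪x, v⟫}) :
    0 < ∫ x in {x | 0 < ⟪x, v⟫}, k x * h x := by
  have hS := measurableSet_setOf_inner_pos v
  have hnonneg : 0 ≤ᵐ[volume.restrict {x | 0 < ⟪x, v⟫}] fun x => k x * h x := by
    filter_upwards [ae_restrict_mem hS, ae_restrict_of_ae hpos] with x hx hhx
    exact mul_nonneg (hk x hx).le (hhx hx)
  refine (integral_nonneg_of_ae hnonneg).lt_of_ne' fun hzero => ?_
  refine not_ae_restrict_eq_zero_of_odd hv hh hodd hne ?_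
  filter_upwards [(integral_eq_zero_iff_of_nonneg_ae hnonneg hkh).1 hzero, ae_restrict_mem hS]
    with x hx hxS
  exact (mul_eq_zero.1 hx).resolve_left (hk x hxS).ne'

theorem integral_mul_eq_setIntegral_of_odd (hv : v ≠ 0) {K : V → ℝ}
    (hKh : Integrable fun y => K y * h y) (hodd : ∀ᵐ x, h ((ℝ ∙ v)ᗮ.reflection x) = -h x) :
    ∫ y, K y * h y = ∫ y in {y | 0 < ⟪y, v⟫}, (K y - K ((ℝ ∙ v)ᗮ.reflection y)) * h y := by
  rw [integral_eq_setIntegral_add_reflection hv hKh]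
  refine setIntegral_congr_ae (measurableSet_setOf_inner_pos v) ?_
  filter_upwards [hodd] with y hy _
  rw [hy]
  ring

theorem integral_mul_pos_of_odd (hv : v ≠ 0) (hh : Integrable h)
    (hodd : ∀ᵐ x, h ((ℝ ∙ v)ᗮ.reflection x) = -h x) (hpos : ∀ᵐ x, 0 < ⟪x, v⟫ → 0 ≤ h x)
    (hne : ¬ h =ᵐ[volume] 0) {K : V → ℝ} (hKh : Integrable fun y => K y * h y)
    (hK : ∀ y, 0 < ⟪y, v⟫ → K ((ℝ ∙ v)ᗮ.reflection y) < K y) :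
    0 < ∫ y, K y * h y := by
  set R := (ℝ ∙ v)ᗮ.reflection
  have hKhR : Integrable fun y => K (R y) * h y := by
    refine (R.measurePreserving.integrable_comp_of_integrable hKh).neg.congr ?_
    filter_upwards [hodd] with y hy
    simp [hy]
  rw [integral_mul_eq_setIntegral_of_odd hv hKh hodd]
  exact setIntegral_mul_pos_of_odd hv hh hodd hpos hne (fun y hy => sub_pos.2 (hK y hy))
    (by simpa only [sub_mul, Pi.sub_def] using (hKh.sub hKhR).integrableOn)

theorem integral_halfSpacePoissonKernel_mul_pos_of_odd (hv : ‖v‖ = 1) (ht : 0 < t)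
    (hh : Integrable h) (hodd : ∀ᵐ x, h ((ℝ ∙ v)ᗮ.reflection x) = -h x)
    (hpos : ∀ᵐ x, 0 < ⟪x, v⟫ → 0 ≤ h x) (hne : ¬ h =ᵐ[volume] 0) {x : V} (hx : 0 < ⟪x, v⟫) :
    0 < ∫ y, halfSpacePoissonKernel t (x - y) * h y :=
  integral_mul_pos_of_odd (norm_ne_zero_iff.1 (hv ▸ one_ne_zero)) hh hodd hpos hne
    (integrable_halfSpacePoissonKernel_mul ht hh x)
    fun _ hy => halfSpacePoissonKernel_sub_reflection_lt hv ht hx hy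

theorem integral_deriv_halfSpacePoissonKernel_mul_of_odd (hv : v ≠ 0) (ht : 0 < t)
    (hh : Integrable h) (hodd : ∀ᵐ x, h ((ℝ ∙ v)ᗮ.reflection x) = -h x) {p : V}
    (hp : ⟪p, v⟫ = 0) :
    ∫ y, -4 * t * ⟪p - y, v⟫ / (t ^ 2 + ‖p - y‖ ^ 2) ^ 3 * h y =
      8 * ∫ y in {y | 0 < ⟪y, v⟫}, t * ⟪y, v⟫ / (t ^ 2 + ‖p - y‖ ^ 2) ^ 3 * h y := by
  rw [integral_mul_eq_setIntegral_of_odd hv (integrable_deriv_halfSpacePoissonKernel_mul ht hh p v)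
    hodd, ← integral_const_mul]
  congr 1
  funext y
  rw [norm_sub_reflection_orthogonal_singleton_of_inner_eq_zero hp, inner_sub_left,
    inner_sub_left, inner_reflection_orthogonal_singleton, hp]
  ring

theorem setIntegral_inner_div_mul_pos_of_odd (hv : v ≠ 0) (ht : 0 < t) (hh : Integrable h)
    (hodd : ∀ᵐ x, h ((ℝ ∙ v)ᗮ.reflection x) = -h x) (hpos : ∀ᵐ x, 0 < ⟪x, v⟫ → 0 ≤ h x)
    (hne : ¬ h =ᵐ[volume] 0) {p : V} (hp : ⟪p, v⟫ = 0) :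
    0 < ∫ y in {y | 0 < ⟪y, v⟫}, t * ⟪y, v⟫ / (t ^ 2 + ‖p - y‖ ^ 2) ^ 3 * h y := by
  refine setIntegral_mul_pos_of_odd hv hh hodd hpos hne (fun y hy => by positivity) ?_
  refine (((integrable_deriv_halfSpacePoissonKernel_mul ht hh p v).const_mul 4⁻¹).congr
    (Eventually.of_forall fun y => ?_)).integrableOn
  simp only [inner_sub_left, hp]
  ring

end OddFunction

theorem inner_single_zero (w : E3) : ⟪w, EuclideanSpace.single 0 1⟫ = w 0 := by
  simp [EuclideanSpace.inner_single_right]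

theorem reflection_orthogonal_single_zero (w : E3) :
    (ℝ ∙ EuclideanSpace.single 0 1)ᗮ.reflection w = pt (-(w 0)) (w 1) (w 2) := by
  rw [reflection_orthogonal_singleton_apply (by simp)]
  ext i
  fin_cases i <;> simp [pt, EuclideanSpace.inner_single_left, two_mul]

theorem norm_pt_zero_sub_sq (y z : ℝ) (w : E3) :
    ‖pt 0 y z - w‖ ^ 2 = (w 0) ^ 2 + (y - w 1) ^ 2 + (z - w 2) ^ 2 := by
  simp [EuclideanSpace.real_norm_sq_eq, Fin.sum_univ_three, pt]

/-- the key computation in the proof of Lemma 3.4.  Let `t > 0` and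
`h ∈ L¹(ℝ³)` be odd with respect to `{x₁ = 0}`, nonnegative on `{x₁ > 0}` and nontrivial.
Then `u = exp(-t√(-Δ)) h` (given by the Poisson kernel) is strictly positive on
`{x₁ > 0}`, and its `x₁`-partial derivative at each point `(0, x')` exists, equals
`(8/π²) ∫_{y₁>0} t y₁ (t² + y₁² + |x'-y'|²)⁻³ h(y) dy`, and is strictly positive. -/
theorem poisson_extension_hopf
    (t : ℝ) (ht : 0 < t)
    (h : E3 → ℝ) (hint : Integrable h)
    (hodd : ∀ᵐ y : E3 ∂(volume), h (pt (-(y 0)) (y 1) (y 2)) = - h y)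
    (hpos : ∀ᵐ y : E3 ∂(volume), 0 < y 0 → 0 ≤ h y)
    (hne : ¬ (h =ᵐ[(volume : Measure E3)] 0))
    (u : E3 → ℝ)
    (hu : ∀ x : E3, u x =
      (Real.pi)^(-2 : ℤ) * ∫ y : E3, t * h y / (t^2 + ‖x - y‖^2)^2) :
    (∀ x : E3, 0 < x 0 → 0 < u x) ∧
    ∀ y z : ℝ,
      HasLineDerivAt ℝ u
        ((8 / Real.pi^2) * ∫ w in {w : E3 | 0 < w 0},
          t * (w 0) * h w / (t^2 + (w 0)^2 + (y - w 1)^2 + (z - w 2)^2)^3)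
        (pt 0 y z) (EuclideanSpace.single 0 (1:ℝ)) ∧
      0 < (8 / Real.pi^2) * ∫ w in {w : E3 | 0 < w 0},
          t * (w 0) * h w / (t^2 + (w 0)^2 + (y - w 1)^2 + (z - w 2)^2)^3 := by
  set e : E3 := EuclideanSpace.single 0 1
  have he : ‖e‖ = 1 := by simp [e]
  have he0 : e ≠ 0 := norm_ne_zero_iff.1 (he ▸ one_ne_zero)
  have hodd' : ∀ᵐ y : E3, h ((ℝ ∙ e)ᗮ.reflection y) = -h y := by
    simpa only [e, reflection_orthogonal_single_zero] using hodd
  have hpos' : ∀ᵐ y : E3, 0 < ⟪y, e⟫ → 0 ≤ h y := by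
    simpa only [e, inner_single_zero] using hpos
  have hu' : u = fun x => Real.pi ^ (-2 : ℤ) * ∫ y, halfSpacePoissonKernel t (x - y) * h y :=
    funext fun x => by simp only [hu, halfSpacePoissonKernel, mul_div_right_comm]
  refine ⟨fun x hx => ?_, fun y z => ?_⟩
  · rw [hu']
    exact mul_pos (by positivity) (integral_halfSpacePoissonKernel_mul_pos_of_odd he ht hint
      hodd' hpos' hne (by rwa [inner_single_zero]))
  have hp : ⟪pt 0 y z, e⟫ = 0 := inner_single_zero _
  have hS : ∫ w in {w : E3 | 0 < w 0},
      t * (w 0) * h w / (t^2 + (w 0)^2 + (y - w 1)^2 + (z - w 2)^2)^3 =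
      ∫ w in {w | 0 < ⟪w, e⟫}, t * ⟪w, e⟫ / (t ^ 2 + ‖pt 0 y z - w‖ ^ 2) ^ 3 * h w := by
    simp only [e, inner_single_zero, norm_pt_zero_sub_sq]
    congr 1
    funext w
    ring
  rw [hS]
  refine ⟨?_, mul_pos (by positivity)
    (setIntegral_inner_div_mul_pos_of_odd he0 ht hint hodd' hpos' hne hp)⟩
  have hD := (hasLineDerivAt_integral_halfSpacePoissonKernel_mul ht hint (pt 0 y z) e).const_mul
    (Real.pi ^ (-2 : ℤ))
  rw [integral_deriv_halfSpacePoissonKernel_mul_of_odd he0 ht hint hodd' hp, zpow_neg, zpow_ofNat,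
    ← mul_assoc, inv_mul_eq_div] at hD
  rw [hu']
  exact hD
end
end

section
/- Let α > 0, a > 0, b > 0, let f ∈ L¹(ℝ³) with f ≥ 0, and let W ≥ 0 be measurable on ℝ³ with |ξ|² W(ξ) ≤ α (f * f)(ξ) a.e. Let m ∈ ℕ₀ and suppose g_0, …, g_m are non-negative integrable functions on ℝ³ such that for each k = 0, …, m: |ξ|ᵏ f(ξ) ≤ (g_k * f)(ξ) a.e. and ‖g_k‖_{L¹} ≤ a bᵏ (2k+1)^{k−1}. Then ‖ |ξ|^{m+2} W ‖_{L¹} ≤ 2 α a² b^m ‖f‖_{L¹}² (2m+2)^{m−1}. -/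
/-!
Since `‖ξ‖ ≤ ‖ξ - η‖ + ‖η‖`, the binomial theorem and Tonelli bound `∫ |ξ|^m (f ∗ f)` by
`∑ₖ C(m,k) Mₖ M_{m-k}` with moments `Mₖ = ∫ |ξ|ᵏ f`, and the domination `|ξ|ᵏ f ≤ gₖ ∗ f` gives
`Mₖ ≤ ‖gₖ‖₁ ‖f‖₁`. The remaining sum `∑ₖ C(m,k) (2k+1)^{k-1} (2(m-k)+1)^{m-k-1} = 2 (2m+2)^{m-1}`
is Abel's identity for the polynomials `Aₙ(x) = x (x+n)^{n-1}`, which are of binomial type,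
evaluated at `x = y = 1/2`. Working with lower Lebesgue integrals in `ℝ≥0∞` means no moment has
to be known finite beforehand.
-/

open MeasureTheory Filter

noncomputable section

open Finset ENNReal

namespace Polynomial

theorem eq_of_derivative_eq_of_eval_zero_eq {R : Type*} [Ring R] [IsAddTorsionFree R]
    {p q : R[X]} (hd : derivative p = derivative q)
    (h0 : p.eval 0 = q.eval 0) : p = q := by
  rw [← sub_eq_zero, eq_C_of_derivative_eq_zero (p := p - q) (by rw [derivative_sub, hd, sub_self]),
    coeff_zero_eq_eval_zero, eval_sub, h0, sub_self, C_0]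

def abelPoly : ℕ → ℝ[X]
  | 0 => 1
  | n + 1 => X * (X + (n + 1 : ℝ[X])) ^ n

@[simp] theorem abelPoly_zero : abelPoly 0 = 1 := rfl

theorem abelPoly_succ (n : ℕ) : abelPoly (n + 1) = X * (X + (n + 1 : ℝ[X])) ^ n := rfl

theorem eval_zero_abelPoly_succ (n : ℕ) : (abelPoly (n + 1)).eval 0 = 0 := by
  simp [abelPoly_succ]

theorem derivative_abelPoly_succ (n : ℕ) :
    derivative (abelPoly (n + 1)) = (n + 1 : ℝ[X]) * (abelPoly n).comp (X + 1) := by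
  cases n with
  | zero => simp [abelPoly_succ]
  | succ n =>
    simp only [abelPoly_succ, derivative_mul, derivative_X, derivative_pow, derivative_add,
      derivative_natCast, derivative_one, mul_comp, X_comp, pow_comp, add_comp, natCast_comp,
      one_comp, C_eq_natCast]
    push_cast
    ring

theorem abelPoly_comp_X_add_C (n : ℕ) (y : ℝ) :
    (abelPoly n).comp (X + C y) =
      ∑ k ∈ range (n + 1), (n.choose k : ℝ[X]) * abelPoly k * C ((abelPoly (n - k)).eval y) := by
  induction n generalizing y with
  | zero => simp
  | succ n ih =>
    -- Both sides differentiate to `(n + 1) • (case n) ∘ (X + 1)`, and agree at `0` as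
    -- `abelPoly (k + 1)` vanishes there.
    refine eq_of_derivative_eq_of_eval_zero_eq ?_ ?_
    · have hchoose : ∀ k, ((n + 1).choose (k + 1) : ℝ[X]) * (k + 1 : ℝ[X]) =
          (n + 1 : ℝ[X]) * (n.choose k : ℝ[X]) := fun k => by
        exact_mod_cast (Nat.add_one_mul_choose_eq n k).symm
      calc derivative ((abelPoly (n + 1)).comp (X + C y))
          = (n + 1 : ℝ[X]) * ((abelPoly n).comp (X + C y)).comp (X + 1) := by
            simp only [derivative_comp, derivative_abelPoly_succ, derivative_add, derivative_X,
              derivative_C, add_zero, one_mul, mul_comp, natCast_comp, add_comp, one_comp, X_comp,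
              C_comp, comp_assoc]
            congr 2
            ring
        _ = (n + 1 : ℝ[X]) * ∑ k ∈ range (n + 1),
              (n.choose k : ℝ[X]) * (abelPoly k).comp (X + 1) * C ((abelPoly (n - k)).eval y) := by
            simp only [ih, sum_comp, mul_comp, natCast_comp, C_comp]
        _ = _ := by
            symm
            rw [derivative_sum, sum_range_succ', mul_sum]
            simp only [derivative_mul, derivative_natCast, derivative_C, abelPoly_zero,
              derivative_one, zero_mul, mul_zero, zero_add, add_zero, derivative_abelPoly_succ,
              Nat.add_sub_add_right]
            refine sum_congr rfl fun k _ => ?_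
            linear_combination
              (hchoose k) * ((abelPoly k).comp (X + 1) * C ((abelPoly (n - k)).eval y))
    · rw [eval_comp, eval_finsetSum, sum_range_succ']
      simp [eval_zero_abelPoly_succ]

theorem eval_add_abelPoly (n : ℕ) (x y : ℝ) :
    (abelPoly n).eval (x + y) =
      ∑ k ∈ range (n + 1), (n.choose k : ℝ) * (abelPoly k).eval x * (abelPoly (n - k)).eval y := by
  simpa [eval_comp, eval_finsetSum] using congrArg (eval x) (abelPoly_comp_X_add_C n y)

theorem two_pow_mul_eval_half_abelPoly (k : ℕ) :
    2 ^ k * (abelPoly k).eval (1 / 2) = (2 * k + 1 : ℝ) ^ ((k : ℝ) - 1) := by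
  cases k with
  | zero => simp
  | succ k =>
    rw [Nat.cast_succ, add_sub_cancel_right, Real.rpow_natCast]
    simp only [abelPoly_succ, eval_mul, eval_pow, eval_add, eval_X, eval_natCast, eval_one]
    rw [show (2 * (k + 1 : ℝ) + 1) = 2 * (1 / 2 + (k + 1)) by ring, mul_pow]
    ring

theorem eval_one_abelPoly (k : ℕ) : (abelPoly k).eval 1 = (k + 1 : ℝ) ^ ((k : ℝ) - 1) := by
  cases k with
  | zero => simp
  | succ k =>
    rw [Nat.cast_succ, add_sub_cancel_right, Real.rpow_natCast]
    simp only [abelPoly_succ, eval_mul, eval_pow, eval_add, eval_X, eval_natCast, eval_one]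
    ring

end Polynomial

open Polynomial in
/-- Abel's identity at `x = y = 1/2`. -/
theorem sum_choose_mul_two_mul_add_one_rpow (m : ℕ) :
    ∑ k ∈ range (m + 1), (m.choose k : ℝ) * (2 * k + 1 : ℝ) ^ ((k : ℝ) - 1) *
        (2 * (m - k : ℕ) + 1 : ℝ) ^ (((m - k : ℕ) : ℝ) - 1) =
      2 * (2 * m + 2 : ℝ) ^ ((m : ℝ) - 1) := by
  calc _ = 2 ^ m * ∑ k ∈ range (m + 1),
          (m.choose k : ℝ) * (abelPoly k).eval (1 / 2) * (abelPoly (m - k)).eval (1 / 2) := by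
        rw [mul_sum]
        refine sum_congr rfl fun k hk => ?_
        rw [← two_pow_mul_eval_half_abelPoly, ← two_pow_mul_eval_half_abelPoly,
          ← pow_sub_mul_pow 2 (mem_range_succ_iff.mp hk)]
        ring
    _ = 2 ^ m * (m + 1 : ℝ) ^ ((m : ℝ) - 1) := by
        rw [← eval_add_abelPoly, add_halves, eval_one_abelPoly]
    _ = _ := by
        rw [show (2 * m + 2 : ℝ) = 2 * (m + 1) by ring, Real.mul_rpow (by norm_num) (by positivity),
          Real.rpow_sub_one two_ne_zero, Real.rpow_natCast]
        field_simp

theorem sum_choose_mul_weighted_abel_terms (a b I : ℝ) (m : ℕ) :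
    ∑ k ∈ range (m + 1), (m.choose k : ℝ) *
        ((a * b ^ k * (2 * k + 1 : ℝ) ^ ((k : ℝ) - 1) * I) *
          (a * b ^ (m - k) * (2 * (m - k : ℕ) + 1 : ℝ) ^ (((m - k : ℕ) : ℝ) - 1) * I)) =
      2 * a ^ 2 * b ^ m * I ^ 2 * (2 * m + 2 : ℝ) ^ ((m : ℝ) - 1) := by
  rw [show ∀ R : ℝ, 2 * a ^ 2 * b ^ m * I ^ 2 * R = a ^ 2 * b ^ m * I ^ 2 * (2 * R) by
      intro R; ring, ← sum_choose_mul_two_mul_add_one_rpow, mul_sum]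
  refine sum_congr rfl fun k hk => ?_
  rw [← pow_mul_pow_sub b (mem_range_succ_iff.mp hk)]
  ring

theorem sum_choose_mul_ofReal_mul_ofReal {x : ℕ → ℝ} (hx : ∀ k, 0 ≤ x k) (m : ℕ) :
    ∑ k ∈ range (m + 1), (m.choose k : ℝ≥0∞) * (ENNReal.ofReal (x k) * ENNReal.ofReal (x (m - k))) =
      ENNReal.ofReal (∑ k ∈ range (m + 1), (m.choose k : ℝ) * (x k * x (m - k))) := by
  rw [ENNReal.ofReal_sum_of_nonneg fun k _ =>
    mul_nonneg (Nat.cast_nonneg _) (mul_nonneg (hx k) (hx (m - k)))]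
  simp_rw [ENNReal.ofReal_mul (Nat.cast_nonneg _), ENNReal.ofReal_mul (hx _),
    ENNReal.ofReal_natCast]

theorem ofReal_integral_sub_mul_le {G : Type*} [Sub G] [MeasurableSpace G] (μ : Measure G)
    (f g : G → ℝ) (ξ : G) :
    ENNReal.ofReal (∫ η, f (ξ - η) * g η ∂μ) ≤ ∫⁻ η, ‖f (ξ - η)‖ₑ * ‖g η‖ₑ ∂μ := by
  simpa only [enorm_mul] using (Real.ofReal_le_enorm _).trans
    (enorm_integral_le_lintegral_enorm (μ := μ) fun η => f (ξ - η) * g η)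

theorem enorm_pow_le_sum_choose {G : Type*} [SeminormedAddCommGroup G] (m : ℕ) (ξ η : G) :
    ‖ξ‖ₑ ^ m ≤ ∑ k ∈ range (m + 1), (m.choose k : ℝ≥0∞) * (‖ξ - η‖ₑ ^ k * ‖η‖ₑ ^ (m - k)) := by
  calc ‖ξ‖ₑ ^ m ≤ (‖ξ - η‖ₑ + ‖η‖ₑ) ^ m := by
        gcongr
        simpa using enorm_sub_le (a := ξ - η) (b := -η)
    _ = _ := by
        rw [add_pow]
        refine sum_congr rfl fun k _ => ?_
        ring

theorem lintegral_enorm_pow_add_two_mul_le {G : Type*} [NormedAddCommGroup G]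
    [MeasurableSpace G] {μ : Measure G} {W f g : G → ℝ} {α : ℝ} (hα : 0 ≤ α)
    (hW0 : 0 ≤ᵐ[μ] W) (hW : ∀ᵐ ξ ∂μ, ‖ξ‖ ^ 2 * W ξ ≤ α * ∫ η, f (ξ - η) * g η ∂μ) (m : ℕ) :
    ∫⁻ ξ, ‖‖ξ‖ ^ (m + 2) * W ξ‖ₑ ∂μ ≤
      ENNReal.ofReal α * ∫⁻ ξ, ‖ξ‖ₑ ^ m * ∫⁻ η, ‖f (ξ - η)‖ₑ * ‖g η‖ₑ ∂μ ∂μ := by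
  rw [← lintegral_const_mul' _ _ ENNReal.ofReal_ne_top]
  refine lintegral_mono_ae ?_
  filter_upwards [hW, hW0] with ξ hξ hWξ
  rw [Real.enorm_of_nonneg (mul_nonneg (by positivity) hWξ), ← ofReal_norm,
    ← ENNReal.ofReal_pow (norm_nonneg ξ)]
  calc ENNReal.ofReal (‖ξ‖ ^ (m + 2) * W ξ)
      ≤ ENNReal.ofReal (α * (‖ξ‖ ^ m * ∫ η, f (ξ - η) * g η ∂μ)) := by
        refine ENNReal.ofReal_le_ofReal ?_
        calc ‖ξ‖ ^ (m + 2) * W ξ = ‖ξ‖ ^ m * (‖ξ‖ ^ 2 * W ξ) := by ring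
          _ ≤ ‖ξ‖ ^ m * (α * ∫ η, f (ξ - η) * g η ∂μ) := by gcongr
          _ = α * (‖ξ‖ ^ m * ∫ η, f (ξ - η) * g η ∂μ) := by ring
    _ = ENNReal.ofReal α *
          (ENNReal.ofReal (‖ξ‖ ^ m) * ENNReal.ofReal (∫ η, f (ξ - η) * g η ∂μ)) := by
        rw [ENNReal.ofReal_mul hα, ENNReal.ofReal_mul (by positivity)]
    _ ≤ _ := by grw [ofReal_integral_sub_mul_le μ f g ξ]

section AddGroup

variable {G : Type*} [AddGroup G] [MeasurableSpace G] [MeasurableAdd₂ G] [MeasurableNeg G]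
  {μ : Measure G} [SFinite μ] [μ.IsAddRightInvariant]

theorem AEMeasurable.sub_mul_prod {F H : G → ℝ≥0∞} (hF : AEMeasurable F μ)
    (hH : AEMeasurable H μ) :
    AEMeasurable (fun p : G × G => F (p.1 - p.2) * H p.2) (μ.prod μ) :=
  (hF.comp_quasiMeasurePreserving (quasiMeasurePreserving_sub_of_right_invariant μ μ)).mul
    hH.comp_snd

theorem lintegral_lintegral_sub_mul {F H : G → ℝ≥0∞} (hF : AEMeasurable F μ)
    (hH : AEMeasurable H μ) :
    ∫⁻ ξ, ∫⁻ η, F (ξ - η) * H η ∂μ ∂μ = (∫⁻ ξ, F ξ ∂μ) * ∫⁻ η, H η ∂μ := by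
  rw [lintegral_lintegral_swap (hF.sub_mul_prod hH), ← lintegral_const_mul'' _ hH]
  refine lintegral_congr fun η => ?_
  rw [lintegral_mul_const'' (f := fun ξ => F (ξ - η)) _
    (hF.comp_quasiMeasurePreserving (measurePreserving_sub_right μ η).quasiMeasurePreserving),
    lintegral_sub_right_eq_self F η]

end AddGroup

section NormedAddCommGroup

variable {G : Type*} [NormedAddCommGroup G] [MeasurableSpace G] [MeasurableAdd₂ G]
  [MeasurableNeg G] {μ : Measure G} [SFinite μ] [μ.IsAddRightInvariant]

theorem lintegral_enorm_pow_mul_conv_le [OpensMeasurableSpace G] {F H : G → ℝ≥0∞}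
    (hF : AEMeasurable F μ) (hH : AEMeasurable H μ) (m : ℕ) :
    ∫⁻ ξ, ‖ξ‖ₑ ^ m * ∫⁻ η, F (ξ - η) * H η ∂μ ∂μ ≤
      ∑ k ∈ range (m + 1), (m.choose k : ℝ≥0∞) *
        ((∫⁻ ξ, ‖ξ‖ₑ ^ k * F ξ ∂μ) * ∫⁻ η, ‖η‖ₑ ^ (m - k) * H η ∂μ) := by
  have hF' : ∀ j, AEMeasurable (fun ξ => ‖ξ‖ₑ ^ j * F ξ) μ := fun j => by fun_prop
  have hH' : ∀ j, AEMeasurable (fun ξ => ‖ξ‖ₑ ^ j * H ξ) μ := fun j => by fun_prop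
  calc ∫⁻ ξ, ‖ξ‖ₑ ^ m * ∫⁻ η, F (ξ - η) * H η ∂μ ∂μ
      = ∫⁻ ξ, ∫⁻ η, ‖ξ‖ₑ ^ m * (F (ξ - η) * H η) ∂μ ∂μ := by
        refine lintegral_congr fun ξ => ?_
        rw [lintegral_const_mul' _ _ (pow_ne_top enorm_ne_top)]
    _ ≤ ∫⁻ ξ, ∫⁻ η, ∑ k ∈ range (m + 1), (m.choose k : ℝ≥0∞) *
          ((‖ξ - η‖ₑ ^ k * F (ξ - η)) * (‖η‖ₑ ^ (m - k) * H η)) ∂μ ∂μ := by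
        gcongr with ξ η
        calc ‖ξ‖ₑ ^ m * (F (ξ - η) * H η)
            ≤ (∑ k ∈ range (m + 1), (m.choose k : ℝ≥0∞) * (‖ξ - η‖ₑ ^ k * ‖η‖ₑ ^ (m - k))) *
                (F (ξ - η) * H η) := by gcongr; exact enorm_pow_le_sum_choose m ξ η
          _ = _ := by
            rw [sum_mul]
            refine sum_congr rfl fun k _ => ?_
            ring
    _ = ∑ k ∈ range (m + 1), (m.choose k : ℝ≥0∞) *
          ∫⁻ ξ, ∫⁻ η, (‖ξ - η‖ₑ ^ k * F (ξ - η)) * (‖η‖ₑ ^ (m - k) * H η) ∂μ ∂μ := by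
        simp_rw [← lintegral_prod _ (Finset.aemeasurable_fun_sum _ fun k _ =>
            ((hF' k).sub_mul_prod (hH' (m - k))).const_mul _),
          ← lintegral_prod _ ((hF' _).sub_mul_prod (hH' _))]
        rw [lintegral_finsetSum' _ fun k _ => ((hF' k).sub_mul_prod (hH' (m - k))).const_mul _]
        exact sum_congr rfl fun k _ => lintegral_const_mul'' _ ((hF' k).sub_mul_prod (hH' (m - k)))
    _ = _ := by simp_rw [lintegral_lintegral_sub_mul (hF' _) (hH' _)]

theorem lintegral_enorm_pow_mul_le_of_le_conv {f g : G → ℝ} (hf : AEStronglyMeasurable f μ)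
    (hg : AEStronglyMeasurable g μ) (hf0 : 0 ≤ᵐ[μ] f) {k : ℕ}
    (hdom : ∀ᵐ ξ ∂μ, ‖ξ‖ ^ k * f ξ ≤ ∫ η, g (ξ - η) * f η ∂μ) :
    ∫⁻ ξ, ‖ξ‖ₑ ^ k * ‖f ξ‖ₑ ∂μ ≤ (∫⁻ ξ, ‖g ξ‖ₑ ∂μ) * ∫⁻ ξ, ‖f ξ‖ₑ ∂μ := by
  rw [← lintegral_lintegral_sub_mul hg.enorm hf.enorm]
  refine lintegral_mono_ae ?_
  filter_upwards [hdom, hf0] with ξ hξ hfξ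
  calc ‖ξ‖ₑ ^ k * ‖f ξ‖ₑ = ENNReal.ofReal (‖ξ‖ ^ k * f ξ) := by
        rw [← Real.enorm_of_nonneg (mul_nonneg (by positivity) hfξ), enorm_mul, enorm_pow,
          enorm_norm]
    _ ≤ _ := (ENNReal.ofReal_le_ofReal hξ).trans (ofReal_integral_sub_mul_le μ g f ξ)

end NormedAddCommGroup

theorem lintegral_enorm_eq_ofReal_integral {α : Type*} [MeasurableSpace α] {μ : Measure α}
    {f : α → ℝ} (hf : Integrable f μ) (hf0 : 0 ≤ᵐ[μ] f) :
    ∫⁻ x, ‖f x‖ₑ ∂μ = ENNReal.ofReal (∫ x, f x ∂μ) := by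
  rw [lintegral_enorm_of_ae_nonneg hf0, ofReal_integral_eq_lintegral_ofReal hf hf0]

theorem moment_bound_for_W_general
    (α a b : ℝ) (hα : 0 < α) (ha : 0 < a) (hb : 0 < b)
    (f W : E3 → ℝ)
    (hfint : Integrable f) (hfpos : ∀ ξ : E3, 0 ≤ f ξ)
    (hWpos : ∀ ξ : E3, 0 ≤ W ξ)
    (hW : ∀ᵐ ξ : E3 ∂(volume), ‖ξ‖^2 * W ξ ≤ α * conv f f ξ)
    (m : ℕ) (g : ℕ → E3 → ℝ)
    (hg : ∀ k : ℕ, k ≤ m →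
      (∀ ξ : E3, 0 ≤ g k ξ) ∧ Integrable (g k) ∧
      (∀ᵐ ξ : E3 ∂(volume), ‖ξ‖^k * f ξ ≤ conv (g k) f ξ) ∧
      (∫ ξ : E3, g k ξ) ≤ a * b^k * (2*(k:ℝ)+1) ^ ((k:ℝ)-1)) :
    eLpNorm (fun ξ : E3 => ‖ξ‖^(m+2) * W ξ) 1 (volume : Measure E3) ≤
      ENNReal.ofReal
        (2 * α * a^2 * b^m * (∫ ξ : E3, f ξ)^2 * (2*(m:ℝ)+2) ^ ((m:ℝ)-1)) := by
  set I := ∫ ξ : E3, f ξ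
  set x : ℕ → ℝ := fun k => a * b ^ k * (2 * k + 1 : ℝ) ^ ((k : ℝ) - 1) * I
  have hx : ∀ k, 0 ≤ x k := fun k => mul_nonneg (by positivity) (integral_nonneg hfpos)
  have hmoment : ∀ k ≤ m, ∫⁻ ξ, ‖ξ‖ₑ ^ k * ‖f ξ‖ₑ ≤ ENNReal.ofReal (x k) := fun k hk => by
    obtain ⟨hg0, hgint, hdom, hgI⟩ := hg k hk
    calc ∫⁻ ξ, ‖ξ‖ₑ ^ k * ‖f ξ‖ₑ ≤ (∫⁻ ξ, ‖g k ξ‖ₑ) * ∫⁻ ξ, ‖f ξ‖ₑ :=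
          lintegral_enorm_pow_mul_le_of_le_conv hfint.1 hgint.1 (ae_of_all _ hfpos) hdom
      _ ≤ _ := by
        rw [lintegral_enorm_eq_ofReal_integral hgint (ae_of_all _ hg0),
          lintegral_enorm_eq_ofReal_integral hfint (ae_of_all _ hfpos),
          ← ENNReal.ofReal_mul (integral_nonneg hg0)]
        exact ENNReal.ofReal_le_ofReal (mul_le_mul_of_nonneg_right hgI (integral_nonneg hfpos))
  calc eLpNorm (fun ξ : E3 => ‖ξ‖^(m+2) * W ξ) 1 volume
      = ∫⁻ ξ, ‖‖ξ‖ ^ (m + 2) * W ξ‖ₑ := eLpNorm_one_eq_lintegral_enorm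
    _ ≤ ENNReal.ofReal α * ∫⁻ ξ, ‖ξ‖ₑ ^ m * ∫⁻ η, ‖f (ξ - η)‖ₑ * ‖f η‖ₑ :=
        lintegral_enorm_pow_add_two_mul_le hα.le (ae_of_all _ hWpos) hW m
    _ ≤ ENNReal.ofReal α * ∑ k ∈ range (m + 1), (m.choose k : ℝ≥0∞) *
          ((∫⁻ ξ, ‖ξ‖ₑ ^ k * ‖f ξ‖ₑ) * ∫⁻ η, ‖η‖ₑ ^ (m - k) * ‖f η‖ₑ) := by
        grw [lintegral_enorm_pow_mul_conv_le hfint.1.enorm hfint.1.enorm m]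
    _ ≤ ENNReal.ofReal α * ∑ k ∈ range (m + 1), (m.choose k : ℝ≥0∞) *
          (ENNReal.ofReal (x k) * ENNReal.ofReal (x (m - k))) := by
        gcongr with k hk
        exacts [hmoment k (mem_range_succ_iff.mp hk), hmoment (m - k) (m.sub_le k)]
    _ = ENNReal.ofReal (α * ∑ k ∈ range (m + 1), (m.choose k : ℝ) * (x k * x (m - k))) := by
        rw [sum_choose_mul_ofReal_mul_ofReal hx, ENNReal.ofReal_mul hα.le]
    _ = _ := by
        rw [sum_choose_mul_weighted_abel_terms]
        congr 1
        ring

/-- the estimate for `‖ |ξ|^{m+2} W ‖₁` in the proof of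
Proposition 4.2.  If `|ξ|² W ≤ α (f ∗ f)` a.e. and `g₀, …, g_m` satisfy
`|ξ|ᵏ f ≤ g_k ∗ f` a.e. with `‖g_k‖₁ ≤ a bᵏ (2k+1)^{k-1}` for `k ≤ m`, then
`‖ |ξ|^{m+2} W ‖₁ ≤ 2 α a² b^m ‖f‖₁² (2m+2)^{m-1}`. -/
theorem moment_bound_for_W
    (α a b : ℝ) (hα : 0 < α) (ha : 0 < a) (hb : 0 < b)
    (f W : E3 → ℝ)
    (hfint : Integrable f) (hfpos : ∀ ξ : E3, 0 ≤ f ξ)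
    (hWpos : ∀ ξ : E3, 0 ≤ W ξ) (hWmeas : Measurable W)
    (hW : ∀ᵐ ξ : E3 ∂(volume), ‖ξ‖^2 * W ξ ≤ α * conv f f ξ)
    (m : ℕ) (g : ℕ → E3 → ℝ)
    (hg : ∀ k : ℕ, k ≤ m →
      (∀ ξ : E3, 0 ≤ g k ξ) ∧ Integrable (g k) ∧
      (∀ᵐ ξ : E3 ∂(volume), ‖ξ‖^k * f ξ ≤ conv (g k) f ξ) ∧
      (∫ ξ : E3, g k ξ) ≤ a * b^k * (2*(k:ℝ)+1) ^ ((k:ℝ)-1)) :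
    eLpNorm (fun ξ : E3 => ‖ξ‖^(m+2) * W ξ) 1 (volume : Measure E3) ≤
      ENNReal.ofReal
        (2 * α * a^2 * b^m * (∫ ξ : E3, f ξ)^2 * (2*(m:ℝ)+2) ^ ((m:ℝ)-1)) :=
  moment_bound_for_W_general α a b hα ha hb f W hfint hfpos hWpos hW m g hg
end
end
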